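/- arXiv:2602.14967 — 8 statements merged into one kernel-verified Lean document; each statement's English description precedes it below -/
import Mathlib

section
/- Let V be a real Hilbert space, K ⊆ V a nonempty closed convex set, A : V × V → ℝ a bilinear form that is bounded (there is M > 0 with |A(u,v)| ≤ M·‖u‖·‖v‖ for all u, v ∈ V) and coercive (there is C > 0 with A(v,v) ≥ C·‖v‖² for all v ∈ V), and f : V → ℝ a continuous linear functional. Then there exists a unique u* ∈ K such that A(u*, v − u*) ≥ f(v − u*) for all v ∈ K. -/
open scoped RealInnerProductSpace

/-!
By the Riesz isomorphism there is `F : V → V` with `⟪F u, v⟫ = A u v - f v`; it is `M`-Lipschitz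
and `C`-strongly monotone, and the variational inequality reads `0 ≤ ⟪F u, v - u⟫`. A point
`u ∈ K` solves it iff `u` is a fixed point of `z ↦ P_K (z - ρ • F z)`, where `P_K` is the metric
projection onto `K`. Since `P_K` is nonexpansive, for `ρ = C / M ^ 2` this map is a contraction
with constant `√(1 - C ^ 2 / M ^ 2)`, so Banach's fixed point theorem gives a solution; strong
monotonicity gives uniqueness.
-/

theorem Real.le_sqrt_mul_of_sq_le_mul_sq {a b s : ℝ} (ha : 0 ≤ a) (hb : 0 ≤ b)
    (h : a ^ 2 ≤ s * b ^ 2) : a ≤ √s * b :=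
  calc a = √(a ^ 2) := (Real.sqrt_sq ha).symm
    _ ≤ √(s * b ^ 2) := Real.sqrt_le_sqrt h
    _ = √s * b := by rw [Real.sqrt_mul' s (sq_nonneg _), Real.sqrt_sq hb]

section VariationalInequality

variable {V : Type*} [NormedAddCommGroup V] [InnerProductSpace ℝ V]

theorem exists_mem_forall_real_inner_sub_le_zero {K : Set V} (hne : K.Nonempty)
    (hcomp : IsComplete K) (hcv : Convex ℝ K) (z : V) :
    ∃ p ∈ K, ∀ v ∈ K, ⟪z - p, v - p⟫ ≤ 0 := by
  obtain ⟨p, hpK, hmin⟩ := exists_norm_eq_iInf_of_complete_convex hne hcomp hcv z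
  exact ⟨p, hpK, (norm_eq_iInf_iff_real_inner_le_zero hcv hpK).mp hmin⟩

/-- The metric projection onto a convex set is nonexpansive. -/
theorem norm_sub_le_of_real_inner_sub_le_zero {a b p q : V} (hp : ⟪a - p, q - p⟫ ≤ 0)
    (hq : ⟪b - q, p - q⟫ ≤ 0) : ‖p - q‖ ≤ ‖a - b‖ := by
  have hsq : ‖p - q‖ ^ 2 ≤ ‖a - b‖ * ‖p - q‖ := by
    have hsplit : ⟪a - b, p - q⟫ - ‖p - q‖ ^ 2 = -⟪a - p, q - p⟫ - ⟪b - q, p - q⟫ := by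
      simp only [← real_inner_self_eq_norm_sq, inner_sub_left, inner_sub_right, real_inner_comm]
      ring
    linarith [real_inner_le_norm (a - b) (p - q)]
  nlinarith [norm_nonneg (p - q), norm_nonneg (a - b)]

theorem norm_sub_smul_sq_le {d e : V} {C M : ℝ} (hC : 0 ≤ C) (hlip : ‖e‖ ≤ M * ‖d‖)
    (hmono : C * ‖d‖ ^ 2 ≤ ⟪e, d⟫) :
    ‖d - (C / M ^ 2) • e‖ ^ 2 ≤ (1 - C ^ 2 / M ^ 2) * ‖d‖ ^ 2 := by
  have he : ‖e‖ ^ 2 ≤ M ^ 2 * ‖d‖ ^ 2 := by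
    rw [← mul_pow]; exact pow_le_pow_left₀ (norm_nonneg e) hlip 2
  calc ‖d - (C / M ^ 2) • e‖ ^ 2
      = ‖d‖ ^ 2 - 2 * (C / M ^ 2) * ⟪e, d⟫ + (C / M ^ 2) ^ 2 * ‖e‖ ^ 2 := by
        rw [norm_sub_sq_real, real_inner_smul_right, norm_smul, mul_pow, Real.norm_eq_abs, sq_abs,
          real_inner_comm]
        ring
    _ ≤ ‖d‖ ^ 2 - 2 * (C / M ^ 2) * (C * ‖d‖ ^ 2) + (C / M ^ 2) ^ 2 * (M ^ 2 * ‖d‖ ^ 2) := by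
        gcongr
    _ = (1 - C ^ 2 / M ^ 2) * ‖d‖ ^ 2 := by field_simp; ring

theorem eq_of_inner_nonneg_of_stronglyMonotone {F : V → V} {C : ℝ} (hC : 0 < C)
    (hmono : ∀ x y, C * ‖x - y‖ ^ 2 ≤ ⟪F x - F y, x - y⟫) {u₁ u₂ : V}
    (h₁ : 0 ≤ ⟪F u₁, u₂ - u₁⟫) (h₂ : 0 ≤ ⟪F u₂, u₁ - u₂⟫) : u₁ = u₂ := by
  have hle : ⟪F u₁ - F u₂, u₁ - u₂⟫ ≤ 0 := by
    simp only [inner_sub_left, inner_sub_right] at h₁ h₂ ⊢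
    linarith
  have : ‖u₁ - u₂‖ ^ 2 ≤ 0 := by nlinarith [hmono u₁ u₂]
  rw [← sub_eq_zero, ← norm_eq_zero]
  exact pow_eq_zero_iff two_ne_zero |>.mp (le_antisymm this (sq_nonneg _))

/-- Stampacchia's theorem for a Lipschitz, strongly monotone operator `F`. -/
theorem existsUnique_forall_inner_nonneg [CompleteSpace V] {K : Set V} (hne : K.Nonempty)
    (hcl : IsClosed K) (hcv : Convex ℝ K) {F : V → V} {C M : ℝ} (hC : 0 < C) (hM : 0 < M)
    (hlip : ∀ x y, ‖F x - F y‖ ≤ M * ‖x - y‖)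
    (hmono : ∀ x y, C * ‖x - y‖ ^ 2 ≤ ⟪F x - F y, x - y⟫) :
    ∃! u, u ∈ K ∧ ∀ v ∈ K, 0 ≤ ⟪F u, v - u⟫ := by
  choose P hPK hP using exists_mem_forall_real_inner_sub_le_zero hne hcl.isComplete hcv
  set ρ := C / M ^ 2
  set k := √(1 - C ^ 2 / M ^ 2)
  have hcontr : ContractingWith k.toNNReal (fun z => P (z - ρ • F z)) := by
    refine ⟨?_, LipschitzWith.of_dist_le_mul fun x y => ?_⟩
    · refine Real.toNNReal_lt_one.mpr <| (Real.sqrt_lt' one_pos).mpr ?_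
      have : 0 < C ^ 2 / M ^ 2 := by positivity
      linarith
    · rw [dist_eq_norm, dist_eq_norm, Real.coe_toNNReal _ (Real.sqrt_nonneg _)]
      refine (norm_sub_le_of_real_inner_sub_le_zero (hP _ _ (hPK _)) (hP _ _ (hPK _))).trans ?_
      refine Real.le_sqrt_mul_of_sq_le_mul_sq (norm_nonneg _) (norm_nonneg _) ?_
      rw [show x - ρ • F x - (y - ρ • F y) = (x - y) - ρ • (F x - F y) by rw [smul_sub]; abel]
      exact norm_sub_smul_sq_le hC.le (hlip x y) (hmono x y)
  have : Nonempty V := ⟨hne.some⟩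
  obtain ⟨u, hu⟩ : ∃ u, P (u - ρ • F u) = u := ⟨_, hcontr.fixedPoint_isFixedPt⟩
  have huK : u ∈ K := hu ▸ hPK _
  have hsol : ∀ v ∈ K, 0 ≤ ⟪F u, v - u⟫ := fun v hv => by
    have := hP (u - ρ • F u) v hv
    rw [hu, sub_sub_cancel_left, inner_neg_left, real_inner_smul_left, neg_nonpos] at this
    exact nonneg_of_mul_nonneg_right this (by positivity)
  exact ⟨u, ⟨huK, hsol⟩, fun u' ⟨hu'K, hu'⟩ =>
    eq_of_inner_nonneg_of_stronglyMonotone hC hmono (hu' u huK) (hsol u' hu'K)⟩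

end VariationalInequality

/-- **Lions–Stampacchia theorem for non-symmetric variational inequalities.**
Let `V` be a real Hilbert space, `K ⊆ V` nonempty closed convex, `A` a bounded
coercive bilinear form (not necessarily symmetric), and `f` a continuous linear
functional. Then there is a unique `u* ∈ K` with
`A(u*, v − u*) ≥ f(v − u*)` for all `v ∈ K`. -/
theorem statement0
    {V : Type*} [NormedAddCommGroup V] [InnerProductSpace ℝ V] [CompleteSpace V]
    (K : Set V) (hKne : K.Nonempty) (hKcl : IsClosed K) (hKcv : Convex ℝ K)
    (A : V →ₗ[ℝ] V →ₗ[ℝ] ℝ) (M : ℝ) (hM : 0 < M)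
    (hAbdd : ∀ u v : V, |A u v| ≤ M * ‖u‖ * ‖v‖)
    (C : ℝ) (hC : 0 < C) (hAcoer : ∀ v : V, C * ‖v‖ ^ 2 ≤ A v v)
    (f : V →L[ℝ] ℝ) :
    ∃! u : V, u ∈ K ∧ ∀ v ∈ K, f (v - u) ≤ A u (v - u) := by
  set B : V →L[ℝ] V →L[ℝ] ℝ := A.mkContinuous₂ M hAbdd
  set F : V → V := fun u => (InnerProductSpace.toDual ℝ V).symm (B u - f)
  have hF : ∀ u v, ⟪F u, v⟫ = A u v - f v := fun u v => by
    simp only [F, InnerProductSpace.toDual_symm_apply, sub_apply, B,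
      LinearMap.mkContinuous₂_apply]
  have hFsub : ∀ x y, F x - F y = (InnerProductSpace.toDual ℝ V).symm (B (x - y)) := fun x y => by
    simp only [F, ← map_sub, sub_sub_sub_cancel_right]
  have hlip : ∀ x y, ‖F x - F y‖ ≤ M * ‖x - y‖ := fun x y => by
    rw [hFsub, LinearIsometryEquiv.norm_map]
    exact B.le_of_opNorm_le (A.mkContinuous₂_norm_le hM.le _) _
  have hmono : ∀ x y, C * ‖x - y‖ ^ 2 ≤ ⟪F x - F y, x - y⟫ := fun x y => by
    rw [hFsub, InnerProductSpace.toDual_symm_apply]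
    exact hAcoer (x - y)
  simpa only [hF, sub_nonneg] using
    existsUnique_forall_inner_nonneg hKne hKcl hKcv hC hM hlip hmono
end

section
/- Let V_h and W_h be real inner product spaces. Let A₀ : V_h × V_h → ℝ be bilinear with A₀(v,v) ≥ C·‖v‖² for all v (C > 0), let A_n : V_h × V_h → ℝ be bilinear with A_n(v,v) = 0 for all v and |A_n(u,v)| ≤ c₁·‖u‖·‖v‖ for all u, v, let b : V_h × W_h → ℝ be bilinear, let G : W_h → W_h be monotone (⟨G ψ₁ − G ψ₂, ψ₁ − ψ₂⟩ ≥ 0 for all ψ₁, ψ₂), let ℓ : V_h → ℝ be linear, and let α > 0, τ, t ∈ ℝ, q₁, q₂ ∈ V_h. Suppose for i = 1, 2 the pairs (u_i, ψ_i) ∈ V_h × W_h satisfy α·(A₀(u_i, v) + τ·A_n(u_i, v)) + b(v, ψ_i) = (τ − t)·α·A_n(q_i, v) + ℓ(v) for all v ∈ V_h, and b(u_i, w) = ⟨G ψ_i, w⟩ for all w ∈ W_h. Then ‖u₁ − u₂‖ ≤ (c₁ / C)·|τ − t|·‖q₁ − q₂‖. -/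
/-!
Testing the difference of the two first equations with `e = u₁ - u₂` kills the skew term
`τ · A_n(e, e)` and leaves `α · A₀(e, e) + b(e, ψ₁ - ψ₂) = (τ - t) · α · A_n(q₁ - q₂, e)`.
By the second equations `b(e, ψ₁ - ψ₂) = ⟪G ψ₁ - G ψ₂, ψ₁ - ψ₂⟫ ≥ 0`, so coercivity of `A₀`
and boundedness of `A_n` give `C ‖e‖² ≤ |τ - t| c₁ ‖q₁ - q₂‖ ‖e‖`; divide by `C ‖e‖`.
-/

open scoped RealInnerProductSpace

lemma le_div_of_mul_sq_le_mul {C K x : ℝ} (hC : 0 < C) (hK : 0 ≤ K) (hx : 0 ≤ x)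
    (h : C * x ^ 2 ≤ K * x) : x ≤ K / C := by
  rw [le_div_iff₀ hC]
  rcases hx.eq_or_lt with rfl | hx
  · simpa using hK
  · exact le_of_mul_le_mul_right (by linarith) hx

section

variable {V W : Type*} [NormedAddCommGroup V] [InnerProductSpace ℝ V]
  [NormedAddCommGroup W] [InnerProductSpace ℝ W]

lemma mul_norm_nonneg_of_skew_of_bound {An : V →ₗ[ℝ] V →ₗ[ℝ] ℝ} {c1 : ℝ}
    (hskew : ∀ v, An v v = 0) (hbdd : ∀ u v : V, |An u v| ≤ c1 * ‖u‖ * ‖v‖) (u : V) :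
    0 ≤ c1 * ‖u‖ := by
  have hu := hbdd u u
  rw [hskew, abs_zero] at hu
  rcases (norm_nonneg u).eq_or_lt with hu0 | hupos
  · rw [← hu0, mul_zero]
  · exact nonneg_of_mul_nonneg_left hu hupos

lemma pairing_sub_nonneg_of_monotone (b : V →ₗ[ℝ] W →ₗ[ℝ] ℝ) {G : W → W} {u1 u2 : V}
    {ψ1 ψ2 : W} (hG : 0 ≤ ⟪G ψ1 - G ψ2, ψ1 - ψ2⟫)
    (h1 : ∀ w, b u1 w = ⟪G ψ1, w⟫) (h2 : ∀ w, b u2 w = ⟪G ψ2, w⟫) :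
    0 ≤ b (u1 - u2) (ψ1 - ψ2) := by
  rwa [LinearMap.map_sub₂, h1, h2, ← inner_sub_left]

lemma shifted_error_identity (A0 An : V →ₗ[ℝ] V →ₗ[ℝ] ℝ) (hskew : ∀ v, An v v = 0)
    (b : V →ₗ[ℝ] W →ₗ[ℝ] ℝ) (f : V → ℝ) (α τ t : ℝ) {q1 q2 u1 u2 : V} {ψ1 ψ2 : W}
    (h1 : ∀ v, α * (A0 u1 v + τ * An u1 v) + b v ψ1 = (τ - t) * α * An q1 v + f v)
    (h2 : ∀ v, α * (A0 u2 v + τ * An u2 v) + b v ψ2 = (τ - t) * α * An q2 v + f v) :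
    α * A0 (u1 - u2) (u1 - u2) + b (u1 - u2) (ψ1 - ψ2)
      = (τ - t) * α * An (q1 - q2) (u1 - u2) := by
  have H1 := h1 (u1 - u2)
  have H2 := h2 (u1 - u2)
  have hAn := hskew (u1 - u2)
  simp only [map_sub, LinearMap.sub_apply] at H1 H2 hAn ⊢
  linear_combination H1 - H2 - α * τ * hAn

end

/-- Contraction estimate for the shifted fixed-point map in the continuation
argument for the proximal Galerkin subproblem: if `(u i, ψ i)` solve the shifted
systems with data `q i` (`i = 1, 2`), then
`‖u₁ − u₂‖ ≤ (c₁ / C) · |τ − t| · ‖q₁ − q₂‖`. -/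
theorem statement3
    {V W : Type*} [NormedAddCommGroup V] [InnerProductSpace ℝ V]
    [NormedAddCommGroup W] [InnerProductSpace ℝ W]
    (A0 : V →ₗ[ℝ] V →ₗ[ℝ] ℝ) (C : ℝ) (hC : 0 < C)
    (hA0coer : ∀ v : V, C * ‖v‖ ^ 2 ≤ A0 v v)
    (An : V →ₗ[ℝ] V →ₗ[ℝ] ℝ) (hAnskew : ∀ v : V, An v v = 0)
    (c1 : ℝ) (hAnbdd : ∀ u v : V, |An u v| ≤ c1 * ‖u‖ * ‖v‖)
    (b : V →ₗ[ℝ] W →ₗ[ℝ] ℝ)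
    (G : W → W) (hG : ∀ ψ1 ψ2 : W, 0 ≤ ⟪G ψ1 - G ψ2, ψ1 - ψ2⟫)
    (l : V →ₗ[ℝ] ℝ) (α : ℝ) (hα : 0 < α) (τ t : ℝ) (q1 q2 : V)
    (u1 u2 : V) (ψ1 ψ2 : W)
    (h1 : ∀ v : V, α * (A0 u1 v + τ * An u1 v) + b v ψ1 = (τ - t) * α * An q1 v + l v)
    (h1' : ∀ w : W, b u1 w = ⟪G ψ1, w⟫)
    (h2 : ∀ v : V, α * (A0 u2 v + τ * An u2 v) + b v ψ2 = (τ - t) * α * An q2 v + l v)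
    (h2' : ∀ w : W, b u2 w = ⟪G ψ2, w⟫) :
    ‖u1 - u2‖ ≤ (c1 / C) * |τ - t| * ‖q1 - q2‖ := by
  have hpair := pairing_sub_nonneg_of_monotone b (hG ψ1 ψ2) h1' h2'
  have herr := shifted_error_identity A0 An hAnskew b l α τ t h1 h2
  set e := u1 - u2
  set q := q1 - q2
  have hA0 : A0 e e ≤ (τ - t) * An q e :=
    le_of_mul_le_mul_left (by linarith) hα
  have henergy : C * ‖e‖ ^ 2 ≤ |τ - t| * (c1 * ‖q‖) * ‖e‖ :=
    calc C * ‖e‖ ^ 2 ≤ (τ - t) * An q e := (hA0coer e).trans hA0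
      _ ≤ |τ - t| * |An q e| := (le_abs_self _).trans (abs_mul _ _).le
      _ ≤ |τ - t| * (c1 * ‖q‖ * ‖e‖) := by gcongr; exact hAnbdd q e
      _ = |τ - t| * (c1 * ‖q‖) * ‖e‖ := by ring
  have hK := mul_nonneg (abs_nonneg (τ - t)) (mul_norm_nonneg_of_skew_of_bound hAnskew hAnbdd q)
  calc ‖e‖ ≤ |τ - t| * (c1 * ‖q‖) / C := le_div_of_mul_sq_le_mul hC hK (norm_nonneg e) henergy
    _ = c1 / C * |τ - t| * ‖q‖ := by ring
end

section
/- Let V_h and W_h be finite-dimensional real inner product spaces. Let A : V_h × V_h → ℝ be a bilinear form (not necessarily symmetric) with A(v,v) ≥ C·‖v‖² for all v ∈ V_h, for some C > 0. Let b : V_h × W_h → ℝ be bilinear and satisfy the inf-sup condition: there is μ > 0 such that for every nonzero w ∈ W_h there exists a nonzero v ∈ V_h with b(v, w) ≥ μ·‖v‖·‖w‖. Let F : W_h → ℝ be convex and differentiable with gradient ∇F : W_h → W_h, let α > 0, and let ℓ : V_h → ℝ be linear. Then there exists exactly one pair (u, ψ) ∈ V_h × W_h such that α·A(u, v) + b(v,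 ψ) = ℓ(v) for all v ∈ V_h and b(u, w) = ⟨∇F(ψ), w⟩ for all w ∈ W_h. -/
/-!
Eliminating `u` with the Riesz representative `A'` of `A` turns the system into the single
equation `S ψ + ∇F ψ = f` for the Schur complement `S = B A'⁻¹ Bᵀ`, which coercivity of `A` and
the inf-sup condition make coercive, though not symmetric. As `∇F` is monotone and `τ I + ∇F` is
onto (a preimage of `r` minimizes `τ/2 ‖ψ‖² + F ψ - ⟪r, ψ⟫`), the equation is equivalent to the
fixed-point problem `ψ = (τ I + ∇F)⁻¹ (f + τ ψ - S ψ)`, whose right-hand side is a contraction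
once `τ > ‖S‖² / (2c)` for a coercivity constant `c` of `S`.
-/

open scoped RealInnerProductSpace

section ConvexGradient

variable {W : Type*} [NormedAddCommGroup W] [InnerProductSpace ℝ W] [CompleteSpace W]
  {F : W → ℝ}

theorem ConvexOn.add_inner_sub_le_of_hasGradientAt (hF : ConvexOn ℝ Set.univ F) {x g : W}
    (hg : HasGradientAt F g x) (y : W) : F x + ⟪g, y - x⟫ ≤ F y := by
  have hline : ConvexOn ℝ Set.univ (F ∘ AffineMap.lineMap (k := ℝ) x y) :=
    hF.comp_affineMap (AffineMap.lineMap (k := ℝ) x y)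
  have hderiv : HasDerivAt (F ∘ AffineMap.lineMap (k := ℝ) x y) ⟪g, y - x⟫ 0 := by
    have h := (hasGradientAt_iff_hasFDerivAt.mp hg)
    rw [← AffineMap.lineMap_apply_zero (k := ℝ) x y] at h
    simpa using h.comp_hasDerivAt (0 : ℝ) AffineMap.hasDerivAt_lineMap
  have := hline.le_slope_of_hasDerivAt (Set.mem_univ _) (Set.mem_univ _) zero_lt_one hderiv
  simp only [slope_def_field, Function.comp_apply, AffineMap.lineMap_apply_one,
    AffineMap.lineMap_apply_zero, sub_zero, div_one] at this
  linarith

theorem ConvexOn.inner_gradient_sub_nonneg (hF : ConvexOn ℝ Set.univ F) {gradF : W → W}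
    (hgrad : ∀ ψ, HasGradientAt F (gradF ψ) ψ) (x y : W) :
    0 ≤ ⟪gradF x - gradF y, x - y⟫ := by
  have hx := hF.add_inner_sub_le_of_hasGradientAt (hgrad x) y
  have hy := hF.add_inner_sub_le_of_hasGradientAt (hgrad y) x
  rw [← neg_sub x y, inner_neg_right] at hx
  rw [inner_sub_left]
  linarith

theorem ConvexOn.exists_smul_add_gradient_eq [FiniteDimensional ℝ W]
    (hF : ConvexOn ℝ Set.univ F) {gradF : W → W} (hgrad : ∀ ψ, HasGradientAt F (gradF ψ) ψ)
    {τ : ℝ} (hτ : 0 < τ) (r : W) :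
    ∃ ψ, τ • ψ + gradF ψ = r := by
  set H : W → ℝ := fun ψ => τ / 2 * ‖ψ‖ ^ 2 + F ψ - ⟪r, ψ⟫
  have hH : ∀ ψ, HasFDerivAt H (InnerProductSpace.toDual ℝ W (τ • ψ + gradF ψ - r)) ψ := by
    intro ψ
    have := (((hasStrictFDerivAt_norm_sq ψ).hasFDerivAt.const_mul (τ / 2)).add
      (hasGradientAt_iff_hasFDerivAt.mp (hgrad ψ))).sub (innerSL ℝ r).hasFDerivAt
    refine this.congr_fderiv ?_
    ext v
    simp only [sub_apply, add_apply, smul_apply, coe_innerSL_apply,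
      InnerProductSpace.toDual_apply_apply, nsmul_eq_mul, smul_eq_mul, inner_add_left,
      inner_sub_left, real_inner_smul_left]
    ring
  set K := ‖gradF 0‖ + ‖r‖
  have hbound : ∀ ψ, ‖ψ‖ * (τ / 2 * ‖ψ‖ - K) + F 0 ≤ H ψ := by
    intro ψ
    have hF0 := hF.add_inner_sub_le_of_hasGradientAt (hgrad 0) ψ
    rw [sub_zero] at hF0
    have h1 := real_inner_le_norm r ψ
    have h2 := neg_le_of_abs_le (abs_real_inner_le_norm (gradF 0) ψ)
    simp only [H, K]
    nlinarith
  have hgrowth : Filter.Tendsto (fun t : ℝ => t * (τ / 2 * t - K) + F 0) Filter.atTop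
      Filter.atTop := by
    refine Filter.tendsto_atTop_add_const_right _ _ (Filter.tendsto_id.atTop_mul_atTop₀ ?_)
    simpa only [sub_eq_add_neg, id_eq] using Filter.tendsto_atTop_add_const_right _ (-K)
      (Filter.tendsto_id.const_mul_atTop (by positivity : 0 < τ / 2))
  have hlim : Filter.Tendsto H (Filter.cocompact W) Filter.atTop :=
    Filter.tendsto_atTop_mono hbound (hgrowth.comp tendsto_norm_cocompact_atTop)
  have hcont : Continuous H := continuous_iff_continuousAt.2 fun ψ => (hH ψ).continuousAt
  obtain ⟨ψ, hψ⟩ := hcont.exists_forall_le hlim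
  have hmin : IsLocalMin H ψ := Filter.Eventually.of_forall hψ
  have hcrit := hmin.hasFDerivAt_eq_zero (hH ψ)
  rw [LinearIsometryEquiv.map_eq_zero_iff, sub_eq_zero] at hcrit
  exact ⟨ψ, hcrit⟩

end ConvexGradient

section MonotoneOperator

variable {W : Type*} [NormedAddCommGroup W] [InnerProductSpace ℝ W] {G : W → W}

theorem mul_norm_sub_le_of_smul_add_eq (hG : ∀ x y, 0 ≤ ⟪G x - G y, x - y⟫) {τ : ℝ}
    {x y r s : W} (hx : τ • x + G x = r) (hy : τ • y + G y = s) :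
    τ * ‖x - y‖ ≤ ‖r - s‖ := by
  have hrs : r - s = τ • (x - y) + (G x - G y) := by rw [← hx, ← hy]; module
  have key : τ * ‖x - y‖ * ‖x - y‖ ≤ ‖r - s‖ * ‖x - y‖ :=
    calc τ * ‖x - y‖ * ‖x - y‖ ≤ τ * ‖x - y‖ ^ 2 + ⟪G x - G y, x - y⟫ := by
          nlinarith [hG x y]
      _ = ⟪r - s, x - y⟫ := by
          rw [hrs, inner_add_left, real_inner_smul_left, real_inner_self_eq_norm_sq]
      _ ≤ ‖r - s‖ * ‖x - y‖ := real_inner_le_norm _ _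
  rcases (norm_nonneg (x - y)).eq_or_lt with h | h
  · rw [← h, mul_zero]; exact norm_nonneg _
  · exact le_of_mul_le_mul_right key h

theorem norm_smul_sub_apply_le_of_coercive {T : W →L[ℝ] W} {c : ℝ}
    (hT : ∀ x, c * ‖x‖ ^ 2 ≤ ⟪T x, x⟫) {τ : ℝ} (hτ : 0 ≤ τ) (x : W) :
    ‖τ • x - T x‖ ≤ √(τ ^ 2 - 2 * τ * c + ‖T‖ ^ 2) * ‖x‖ := by
  have hsq : ‖τ • x - T x‖ ^ 2 ≤ (τ ^ 2 - 2 * τ * c + ‖T‖ ^ 2) * ‖x‖ ^ 2 := by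
    have hTx : ‖T x‖ ≤ ‖T‖ * ‖x‖ := T.le_opNorm x
    have hcross := mul_le_mul_of_nonneg_left (hT x) hτ
    rw [norm_sub_sq_real, norm_smul, Real.norm_of_nonneg hτ, real_inner_smul_left,
      real_inner_comm]
    nlinarith [norm_nonneg (T x), norm_nonneg x]
  calc ‖τ • x - T x‖ = √(‖τ • x - T x‖ ^ 2) := (Real.sqrt_sq (norm_nonneg _)).symm
    _ ≤ √((τ ^ 2 - 2 * τ * c + ‖T‖ ^ 2) * ‖x‖ ^ 2) := Real.sqrt_le_sqrt hsq
    _ = √(τ ^ 2 - 2 * τ * c + ‖T‖ ^ 2) * ‖x‖ := by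
      rw [Real.sqrt_mul' _ (sq_nonneg _), Real.sqrt_sq (norm_nonneg _)]

theorem existsUnique_apply_add_eq_of_coercive [CompleteSpace W] {T : W →L[ℝ] W} {c : ℝ}
    (hc : 0 < c) (hT : ∀ x, c * ‖x‖ ^ 2 ≤ ⟪T x, x⟫) (hG : ∀ x y, 0 ≤ ⟪G x - G y, x - y⟫)
    (hres : ∀ τ : ℝ, 0 < τ → ∀ r, ∃ x, τ • x + G x = r) (f : W) :
    ∃! x, T x + G x = f := by
  set τ := ‖T‖ ^ 2 / c + c
  have hτ : 0 < τ := by positivity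
  choose R hR using hres τ hτ
  have hR_lip : ∀ r s, τ * ‖R r - R s‖ ≤ ‖r - s‖ := fun r s =>
    mul_norm_sub_le_of_smul_add_eq hG (hR r) (hR s)
  have hR_unique : ∀ r x, τ • x + G x = r → x = R r := by
    intro r x hx
    have := mul_norm_sub_le_of_smul_add_eq hG hx (hR r)
    rw [sub_self, norm_zero] at this
    exact sub_eq_zero.mp (norm_le_zero_iff.mp (nonpos_of_mul_nonpos_right this hτ))
  set Φ : W → W := fun x => R (f + (τ • x - T x))
  have hfix : ∀ x, T x + G x = f ↔ Function.IsFixedPt Φ x := by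
    intro x
    constructor
    · intro hx
      exact (hR_unique _ x (by rw [← hx]; abel)).symm
    · intro hx
      have := hR (f + (τ • x - T x))
      rw [show R (f + (τ • x - T x)) = x from hx] at this
      linear_combination (norm := module) this
  obtain ⟨k, hk_def⟩ : ∃ k : NNReal, (k : ℝ) = √(τ ^ 2 - 2 * τ * c + ‖T‖ ^ 2) / τ :=
    ⟨⟨_, by positivity⟩, rfl⟩
  have hk : k < 1 := by
    rw [← NNReal.coe_lt_coe, NNReal.coe_one, hk_def, div_lt_one hτ, Real.sqrt_lt' hτ]
    have : τ * c = ‖T‖ ^ 2 + c ^ 2 := by simp only [τ]; field_simp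
    nlinarith [sq_nonneg ‖T‖]
  have hΦ : ContractingWith k Φ := by
    refine ⟨hk, LipschitzWith.of_dist_le_mul fun x y => ?_⟩
    rw [dist_eq_norm, dist_eq_norm, hk_def, div_mul_eq_mul_div, le_div_iff₀ hτ, mul_comm]
    calc τ * ‖Φ x - Φ y‖ ≤ ‖τ • (x - y) - T (x - y)‖ := by
          refine (hR_lip _ _).trans_eq (congrArg norm ?_)
          rw [map_sub]; module
      _ ≤ _ := norm_smul_sub_apply_le_of_coercive hT hτ.le (x - y)
  have : Nonempty W := ⟨0⟩
  exact ⟨ContractingWith.fixedPoint Φ hΦ, (hfix _).2 (ContractingWith.fixedPoint_isFixedPt hΦ),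
    fun x hx => hΦ.fixedPoint_unique ((hfix x).1 hx)⟩

end MonotoneOperator

section SchurComplement

variable {R M N : Type*} [Ring R] [AddCommGroup M] [Module R M] [AddCommGroup N] [Module R N]

def schurComplement (A : M ≃ₗ[R] M) (B : M →ₗ[R] N) (B' : N →ₗ[R] M) : N →ₗ[R] N :=
  B ∘ₗ A.symm.toLinearMap ∘ₗ B'

theorem add_eq_and_eq_iff_schurComplement {A : M ≃ₗ[R] M} {B : M →ₗ[R] N} {B' : N →ₗ[R] M}
    {G : N → N} {g : M} {u : M} {ψ : N} :
    (A u + B' ψ = g ∧ B u = G ψ) ↔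
      (u = A.symm (g - B' ψ) ∧ schurComplement A B B' ψ + G ψ = B (A.symm g)) := by
  rw [← eq_sub_iff_add_eq, ← LinearEquiv.eq_symm_apply]
  refine and_congr_right fun hu => ?_
  rw [hu, schurComplement, map_sub, map_sub, sub_eq_iff_eq_add', eq_comm]
  rfl

end SchurComplement

theorem mul_norm_le_norm_of_inf_sup {V W : Type*} [NormedAddCommGroup V]
    [InnerProductSpace ℝ V] [NormedAddCommGroup W] {T : W → V} {μ : ℝ}
    (hT : ∀ w, w ≠ 0 → ∃ v, v ≠ 0 ∧ μ * ‖v‖ * ‖w‖ ≤ ⟪T w, v⟫) (w : W) :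
    μ * ‖w‖ ≤ ‖T w‖ := by
  rcases eq_or_ne w 0 with rfl | hw
  · simp
  obtain ⟨v, hv, hμv⟩ := hT w hw
  have hv' : 0 < ‖v‖ := norm_pos_iff.mpr hv
  have := hμv.trans (real_inner_le_norm (T w) v)
  nlinarith

section SaddlePoint

variable {V W : Type*} [NormedAddCommGroup V] [InnerProductSpace ℝ V]
  [NormedAddCommGroup W] [InnerProductSpace ℝ W]

theorem exists_linearMap_inner_eq [FiniteDimensional ℝ V] {X : Type*} [AddCommGroup X]
    [Module ℝ X] (T : X →ₗ[ℝ] V →ₗ[ℝ] ℝ) : ∃ T' : X →ₗ[ℝ] V, ∀ x v, ⟪T' x, v⟫ = T x v := by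
  let T' : X → V := fun x =>
    (InnerProductSpace.toDual ℝ V).symm (LinearMap.toContinuousLinearMap (T x))
  have hT' : ∀ x v, ⟪T' x, v⟫ = T x v := fun x v => by
    simp [T', InnerProductSpace.toDual_symm_apply]
  refine ⟨{ toFun := T', map_add' := fun x y => ?_, map_smul' := fun t x => ?_ }, hT'⟩
  · exact ext_inner_right ℝ fun v => by
      simp only [inner_add_left, hT', map_add, LinearMap.add_apply]
  · exact ext_inner_right ℝ fun v => by
      simp only [real_inner_smul_left, hT', map_smul, LinearMap.smul_apply, smul_eq_mul,
        RingHom.id_apply]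

theorem exists_linearEquiv_inner_eq_of_coercive [FiniteDimensional ℝ V]
    (A : V →ₗ[ℝ] V →ₗ[ℝ] ℝ) {C : ℝ} (hC : 0 < C) (hA : ∀ v, C * ‖v‖ ^ 2 ≤ A v v) :
    ∃ A' : V ≃ₗ[ℝ] V, ∀ u v, ⟪A' u, v⟫ = A u v := by
  obtain ⟨A', hA'⟩ := exists_linearMap_inner_eq A
  refine ⟨LinearEquiv.ofInjectiveEndo A' ?_, hA'⟩
  rw [← LinearMap.ker_eq_bot, LinearMap.ker_eq_bot']
  intro u hu
  have := hA u
  rw [← hA', hu, inner_zero_left] at this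
  exact norm_eq_zero.mp (pow_eq_zero_iff two_ne_zero |>.mp
    (le_antisymm (nonpos_of_mul_nonpos_right this hC) (sq_nonneg _)))

theorem exists_coercive_schurComplement [FiniteDimensional ℝ V] {A : V ≃ₗ[ℝ] V} {C : ℝ}
    (hC : 0 < C) (hA : ∀ v, C * ‖v‖ ^ 2 ≤ ⟪A v, v⟫) {B : V →ₗ[ℝ] W} {B' : W →ₗ[ℝ] V}
    (hBB' : ∀ v ψ, ⟪B v, ψ⟫ = ⟪B' ψ, v⟫) {μ : ℝ} (hμ : 0 < μ) (hB' : ∀ ψ, μ * ‖ψ‖ ≤ ‖B' ψ‖) :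
    ∃ c, 0 < c ∧ ∀ ψ, c * ‖ψ‖ ^ 2 ≤ ⟪schurComplement A B B' ψ, ψ⟫ := by
  set K := ‖LinearMap.toContinuousLinearMap (A : V →ₗ[ℝ] V)‖
  refine ⟨C * μ ^ 2 / (K ^ 2 + 1), by positivity, fun ψ => ?_⟩
  set x := A.symm (B' ψ)
  have hS : ⟪schurComplement A B B' ψ, ψ⟫ = ⟪A x, x⟫ := by
    rw [schurComplement, LinearMap.comp_apply, LinearMap.comp_apply, hBB',
      LinearEquiv.coe_coe, LinearEquiv.apply_symm_apply, real_inner_comm]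
  have hx : μ * ‖ψ‖ ≤ K * ‖x‖ := by
    refine (hB' ψ).trans ?_
    have := (LinearMap.toContinuousLinearMap (A : V →ₗ[ℝ] V)).le_opNorm x
    rwa [LinearMap.coe_toContinuousLinearMap', LinearEquiv.coe_coe,
      LinearEquiv.apply_symm_apply] at this
  have hAx := hA x
  rw [hS, div_mul_eq_mul_div, div_le_iff₀ (by positivity)]
  have hμψ : 0 ≤ μ * ‖ψ‖ := by positivity
  have : (μ * ‖ψ‖) ^ 2 ≤ (K * ‖x‖) ^ 2 := pow_le_pow_left₀ hμψ hx 2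
  nlinarith [sq_nonneg K, sq_nonneg ‖x‖, mul_le_mul_of_nonneg_left this hC.le]

theorem existsUnique_saddlePoint [FiniteDimensional ℝ V] [FiniteDimensional ℝ W]
    (A : V →ₗ[ℝ] V →ₗ[ℝ] ℝ) {C : ℝ} (hC : 0 < C) (hA : ∀ v, C * ‖v‖ ^ 2 ≤ A v v)
    (b : V →ₗ[ℝ] W →ₗ[ℝ] ℝ) {μ : ℝ} (hμ : 0 < μ)
    (hb : ∀ w, w ≠ 0 → ∃ v, v ≠ 0 ∧ μ * ‖v‖ * ‖w‖ ≤ b v w)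
    {G : W → W} (hG : ∀ x y, 0 ≤ ⟪G x - G y, x - y⟫)
    (hres : ∀ τ : ℝ, 0 < τ → ∀ r, ∃ x, τ • x + G x = r) (l : V →ₗ[ℝ] ℝ) :
    ∃! p : V × W, (∀ v, A p.1 v + b v p.2 = l v) ∧ ∀ w, b p.1 w = ⟪G p.2, w⟫ := by
  obtain ⟨A', hA'⟩ := exists_linearEquiv_inner_eq_of_coercive A hC hA
  obtain ⟨B, hB⟩ := exists_linearMap_inner_eq b
  obtain ⟨B', hB'⟩ := exists_linearMap_inner_eq b.flip
  set g := (InnerProductSpace.toDual ℝ V).symm (LinearMap.toContinuousLinearMap l)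
  have hg : ∀ v, ⟪g, v⟫ = l v := by simp [g, InnerProductSpace.toDual_symm_apply]
  have hsys : ∀ u ψ, ((∀ v, A u v + b v ψ = l v) ∧ ∀ w, b u w = ⟪G ψ, w⟫) ↔
      (A' u + B' ψ = g ∧ B u = G ψ) := fun u ψ => by
    refine and_congr ⟨fun h => ext_inner_right ℝ fun v => ?_, fun h v => ?_⟩
      ⟨fun h => ext_inner_right ℝ fun w => (hB u w).trans (h w), fun h w => by rw [← hB, h]⟩
    · rw [inner_add_left, hA', hB', hg, LinearMap.flip_apply, h]
    · rw [← hg, ← h, inner_add_left, hA', hB', LinearMap.flip_apply]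
  obtain ⟨c, hc, hS⟩ := exists_coercive_schurComplement hC
    (fun v => (hA v).trans_eq (hA' v v).symm) (B' := B')
    (fun v ψ => by rw [hB, hB', LinearMap.flip_apply]) hμ
    (mul_norm_le_norm_of_inf_sup fun w hw => by
      simpa only [hB', LinearMap.flip_apply] using hb w hw)
  obtain ⟨ψ, hψ, hψ_unique⟩ := existsUnique_apply_add_eq_of_coercive
    (T := LinearMap.toContinuousLinearMap (schurComplement A' B B')) hc hS hG hres (B (A'.symm g))
  refine ⟨(A'.symm (g - B' ψ), ψ), ?_, fun ⟨u, φ⟩ hp => ?_⟩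
  · exact (hsys _ _).2 (add_eq_and_eq_iff_schurComplement.2 ⟨rfl, hψ⟩)
  · obtain ⟨rfl, hφ⟩ := add_eq_and_eq_iff_schurComplement.1 ((hsys u φ).1 hp)
    obtain rfl := hψ_unique φ hφ
    rfl

end SaddlePoint

/-- Well-posedness of the proximal Galerkin subproblem for a non-symmetric
coercive bilinear form: in finite dimensions, under the inf-sup condition on `b`
and for a convex differentiable `F`, the coupled system
`α·A(u, v) + b(v, ψ) = ℓ(v)` and `b(u, w) = ⟨∇F(ψ), w⟩` has a unique solution. -/
theorem statement4
    {V W : Type*} [NormedAddCommGroup V] [InnerProductSpace ℝ V] [FiniteDimensional ℝ V]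
    [NormedAddCommGroup W] [InnerProductSpace ℝ W] [FiniteDimensional ℝ W]
    (A : V →ₗ[ℝ] V →ₗ[ℝ] ℝ) (C : ℝ) (hC : 0 < C)
    (hAcoer : ∀ v : V, C * ‖v‖ ^ 2 ≤ A v v)
    (b : V →ₗ[ℝ] W →ₗ[ℝ] ℝ) (μ : ℝ) (hμ : 0 < μ)
    (hinfsup : ∀ w : W, w ≠ 0 → ∃ v : V, v ≠ 0 ∧ μ * ‖v‖ * ‖w‖ ≤ b v w)
    (F : W → ℝ) (hFconv : ConvexOn ℝ Set.univ F)
    (gradF : W → W) (hgrad : ∀ ψ : W, HasGradientAt F (gradF ψ) ψ)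
    (α : ℝ) (hα : 0 < α) (l : V →ₗ[ℝ] ℝ) :
    ∃! p : V × W, (∀ v : V, α * A p.1 v + b v p.2 = l v) ∧
      (∀ w : W, b p.1 w = ⟪gradF p.2, w⟫) := by
  have hαA : ∀ v, α * C * ‖v‖ ^ 2 ≤ (α • A) v v := fun v => by
    rw [LinearMap.smul_apply, LinearMap.smul_apply, smul_eq_mul, mul_assoc]
    exact mul_le_mul_of_nonneg_left (hAcoer v) hα.le
  simpa only [LinearMap.smul_apply, smul_eq_mul] using
    existsUnique_saddlePoint (α • A) (mul_pos hα hC) hαA b hμ hinfsup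
      (hFconv.inner_gradient_sub_nonneg hgrad)
      (fun _ hτ => hFconv.exists_smul_add_gradient_eq hgrad hτ) l
end

section
/- Let X and Y be finite-dimensional real inner product spaces, a : X × X → ℝ a symmetric bilinear form with a(x,x) ≥ C·‖x‖² for all x (C > 0), ℓ : X → ℝ linear, F : Y → ℝ convex and differentiable with gradient ∇F : Y → Y, and b : X × Y → ℝ bilinear satisfying the inf-sup condition: there is μ > 0 such that for every nonzero φ ∈ Y there exists a nonzero x ∈ X with b(x, φ) ≥ μ·‖x‖·‖φ‖. Define L(w, φ) = (1/2)·a(w,w) − ℓ(w) + b(w, φ) − F(φ). Then L admits a saddle point (u, ψ) ∈ X × Y, i.e. L(u, φ) ≤ L(u, ψ) ≤ L(w, ψ) for all w ∈ X and φ ∈ Y, and every saddle point (u, ψ) satisfies a(u, v) + b(v, ψ) = ℓ(v) for all v ∈ X and b(u, w) = ⟨∇F(ψ), w⟩ for all w ∈ Y. -/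
/-!
For fixed `ψ`, `w ↦ L(w, ψ)` is a convex quadratic and, for fixed `u`, `φ ↦ L(u, φ)` is concave
and differentiable, so `(u, ψ)` is a saddle point exactly when both first variations vanish; these
are the two equations of the system.

For existence, eliminate `u`. Let `S : Y → X` solve `a(Sφ, v) = b(v, φ)`; the inf-sup condition
makes `S` injective, hence bounded below in finite dimensions. The dual functional
`J(φ) = F(φ) + ½ a(Sφ, Sφ) − ℓ(Sφ)` is continuous and grows quadratically, since `F` lies above its
tangent plane at `0`, so it attains its minimum at some `ψ`. Solving `a(u, v) = ℓ(v) − b(v, ψ)`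
gives the first equation, and the stationarity of `J` at `ψ` is the second one.
-/

open Set Filter Function
open scoped RealInnerProductSpace

section Calculus

theorem HasDerivAt.add_eq_zero_of_forall_le {h : ℝ → ℝ} {d β γ : ℝ} (hd : HasDerivAt h d 0)
    (hmin : ∀ t, h 0 ≤ h t + β * t + γ * t ^ 2) : d + β = 0 := by
  have hderiv : HasDerivAt (fun t => h t + β * t + γ * t ^ 2)
      (d + β * 1 + γ * (↑2 * 0 ^ (2 - 1))) 0 :=
    (hd.add ((hasDerivAt_id' 0).const_mul β)).add ((hasDerivAt_pow 2 0).const_mul γ)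
  have hloc : IsLocalMin (fun t => h t + β * t + γ * t ^ 2) 0 :=
    Eventually.of_forall fun t => by simpa using hmin t
  simpa using hloc.hasDerivAt_eq_zero hderiv

variable {E : Type*} [NormedAddCommGroup E] [InnerProductSpace ℝ E] [CompleteSpace E]

theorem HasGradientAt.hasDerivAt_add_smul {f : E → ℝ} {g x : E} (hf : HasGradientAt f g x)
    (v : E) : HasDerivAt (fun t : ℝ => f (x + t • v)) ⟪g, v⟫ 0 := by
  simpa [HasLineDerivAt] using hf.hasFDerivAt.hasLineDerivAt v

theorem ConvexOn.add_inner_le_of_hasGradientAt {f : E → ℝ} (hf : ConvexOn ℝ univ f) {g x : E}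
    (hg : HasGradientAt f g x) (y : E) : f x + ⟪g, y - x⟫ ≤ f y := by
  have hline : ConvexOn ℝ univ (f ∘ AffineMap.lineMap (k := ℝ) x y) := by
    simpa using hf.comp_affineMap (AffineMap.lineMap (k := ℝ) x y)
  have hderiv : HasDerivAt (f ∘ AffineMap.lineMap (k := ℝ) x y) ⟪g, y - x⟫ 0 := by
    convert hg.hasDerivAt_add_smul (y - x) using 2 with t
    rw [comp_apply, AffineMap.lineMap_apply_module', add_comm]
  have := hline.le_slope_of_hasDerivAt (mem_univ 0) (mem_univ 1) zero_lt_one hderiv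
  simp only [slope_def_field, comp_apply, AffineMap.lineMap_apply_zero,
    AffineMap.lineMap_apply_one, sub_zero, div_one] at this
  linarith

end Calculus

theorem exists_forall_le_of_quadratic_growth {E : Type*} [NormedAddCommGroup E] [ProperSpace E]
    {J : E → ℝ} (hJ : Continuous J) {c M k : ℝ} (hc : 0 < c)
    (hgrowth : ∀ x, c * ‖x‖ ^ 2 - M * ‖x‖ + k ≤ J x) : ∃ x, ∀ y, J x ≤ J y := by
  have hpoly : Tendsto (fun r : ℝ => c * r ^ 2 - M * r + k) atTop atTop := by
    have := tendsto_id.atTop_mul_atTop₀ (tendsto_atTop_add_const_right _ (-M)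
      (tendsto_id.const_mul_atTop hc))
    refine tendsto_atTop_add_const_right _ k (this.congr fun r => ?_)
    simp only [id]
    ring
  exact hJ.exists_forall_le (tendsto_atTop_mono hgrowth (hpoly.comp tendsto_norm_cocompact_atTop))

theorem LinearMap.continuous_apply_self {E : Type*} [NormedAddCommGroup E] [NormedSpace ℝ E]
    [FiniteDimensional ℝ E] (B : E →ₗ[ℝ] E →ₗ[ℝ] ℝ) : Continuous fun x => B x x :=
  B.toContinuousBilinearMap.continuous₂.comp (continuous_id.prodMk continuous_id)

namespace LinearMap.BilinForm

theorem apply_add_smul_self {R M : Type*} [CommRing R] [AddCommGroup M] [Module R M]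
    (a : LinearMap.BilinForm R M) (ha : ∀ x y, a x y = a y x) (x y : M) (t : R) :
    a (x + t • y) (x + t • y) = a x x + 2 * t * a x y + t ^ 2 * a y y := by
  simp only [map_add, map_smul, LinearMap.add_apply, LinearMap.smul_apply, smul_eq_mul, ha y x]
  ring

variable {X : Type*} [NormedAddCommGroup X] [NormedSpace ℝ X] {a : LinearMap.BilinForm ℝ X} {C : ℝ}

theorem nondegenerate_of_coercive (hC : 0 < C) (hcoer : ∀ x, C * ‖x‖ ^ 2 ≤ a x x) :
    a.Nondegenerate := by
  have hdiag : ∀ x, a x x = 0 → x = 0 := fun x hx => by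
    have := hcoer x
    rw [hx] at this
    simpa using nonpos_of_mul_nonpos_right this hC
  exact ⟨fun x hx => hdiag x (hx x), fun y hy => hdiag y (hy y)⟩

theorem apply_self_nonneg_of_coercive (hC : 0 < C) (hcoer : ∀ x, C * ‖x‖ ^ 2 ≤ a x x) (x : X) :
    0 ≤ a x x :=
  (by positivity : 0 ≤ C * ‖x‖ ^ 2).trans (hcoer x)

theorem exists_pos_mul_sq_le_of_injective {Y : Type*} [NormedAddCommGroup Y] [NormedSpace ℝ Y]
    [FiniteDimensional ℝ Y] (hC : 0 < C) (hcoer : ∀ x, C * ‖x‖ ^ 2 ≤ a x x) {S : Y →ₗ[ℝ] X}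
    (hS : Injective S) : ∃ c > 0, ∀ y, c * ‖y‖ ^ 2 ≤ a (S y) (S y) := by
  obtain ⟨K, hK, hanti⟩ := S.injective_iff_antilipschitz.1 hS
  have hK' : (0 : ℝ) < K := hK
  refine ⟨C / K ^ 2, by positivity, fun y => ?_⟩
  have hbound : ‖y‖ ≤ K * ‖S y‖ := ZeroHomClass.bound_of_antilipschitz S hanti y
  calc C / K ^ 2 * ‖y‖ ^ 2 ≤ C / K ^ 2 * (K * ‖S y‖) ^ 2 := by gcongr
    _ = C * ‖S y‖ ^ 2 := by field_simp
    _ ≤ a (S y) (S y) := hcoer _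

end LinearMap.BilinForm

theorem separatingRight_of_infSup {X Y : Type*} [NormedAddCommGroup X] [NormedSpace ℝ X]
    [NormedAddCommGroup Y] [NormedSpace ℝ Y] {b : X →ₗ[ℝ] Y →ₗ[ℝ] ℝ} {μ : ℝ} (hμ : 0 < μ)
    (hinfsup : ∀ φ : Y, φ ≠ 0 → ∃ x : X, x ≠ 0 ∧ μ * ‖x‖ * ‖φ‖ ≤ b x φ) : b.SeparatingRight := by
  intro φ hφ
  by_contra hne
  obtain ⟨x, hx, hbx⟩ := hinfsup φ hne
  rw [hφ x] at hbx
  have : 0 < μ * ‖x‖ * ‖φ‖ := by positivity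
  linarith

theorem isSaddlePointOn_univ_iff {E F β : Type*} [Preorder β] {f : E → F → β} {u : E} {ψ : F} :
    IsSaddlePointOn univ univ f u ψ ↔ (∀ φ, f u φ ≤ f u ψ) ∧ ∀ w, f u ψ ≤ f w ψ :=
  ⟨fun h => ⟨fun φ => h u trivial φ trivial, fun w => h w trivial ψ trivial⟩,
    fun h w _ φ _ => (h.1 φ).trans (h.2 w)⟩

section Lagrangian

variable {X Y : Type*} [AddCommGroup X] [Module ℝ X]
  [NormedAddCommGroup Y] [InnerProductSpace ℝ Y]
  {a : LinearMap.BilinForm ℝ X} {l : X →ₗ[ℝ] ℝ} {b : X →ₗ[ℝ] Y →ₗ[ℝ] ℝ} {F : Y → ℝ}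

variable (a l b F) in
noncomputable def lagrangian (w : X) (φ : Y) : ℝ :=
  (1 / 2) * a w w - l w + b w φ - F φ

theorem lagrangian_add_smul_left (ha : ∀ x y, a x y = a y x) (u v : X) (ψ : Y) (t : ℝ) :
    lagrangian a l b F (u + t • v) ψ =
      lagrangian a l b F u ψ + t * (a u v + b v ψ - l v) + t ^ 2 * (1 / 2 * a v v) := by
  rw [lagrangian, lagrangian, a.apply_add_smul_self ha]
  simp only [map_add, map_smul, LinearMap.add_apply, LinearMap.smul_apply, smul_eq_mul]
  ring

theorem forall_lagrangian_le_left_iff (ha : ∀ x y, a x y = a y x) (hpos : ∀ v, 0 ≤ a v v)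
    {u : X} {ψ : Y} :
    (∀ w, lagrangian a l b F u ψ ≤ lagrangian a l b F w ψ) ↔ ∀ v, a u v + b v ψ = l v := by
  refine ⟨fun hmin v => ?_, fun hsys w => ?_⟩
  · have := (hasDerivAt_const (0 : ℝ) (0 : ℝ)).add_eq_zero_of_forall_le
      (β := a u v + b v ψ - l v) (γ := 1 / 2 * a v v) fun t => by
        have := hmin (u + t • v)
        rw [lagrangian_add_smul_left ha] at this
        linarith
    linarith
  · have h := lagrangian_add_smul_left (l := l) (b := b) (F := F) ha u (w - u) ψ 1
    rw [one_smul, add_sub_cancel, hsys (w - u), sub_self] at h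
    linarith [hpos (w - u)]

theorem forall_lagrangian_le_right_iff [CompleteSpace Y] (hF : ConvexOn ℝ univ F) {g : Y} {u : X}
    {ψ : Y} (hg : HasGradientAt F g ψ) :
    (∀ φ, lagrangian a l b F u φ ≤ lagrangian a l b F u ψ) ↔ ∀ w, b u w = ⟪g, w⟫ := by
  refine ⟨fun hmax w => ?_, fun hsys φ => ?_⟩
  · have := (hg.hasDerivAt_add_smul w).add_eq_zero_of_forall_le (β := -b u w) (γ := 0) fun t => by
      have := hmax (ψ + t • w)
      simp only [lagrangian, map_add, map_smul, smul_eq_mul] at this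
      rw [zero_smul, add_zero]
      linarith
    linarith
  · have hsub := hF.add_inner_le_of_hasGradientAt hg φ
    have hb : b u (φ - ψ) = ⟪g, φ - ψ⟫ := hsys _
    simp only [lagrangian, map_sub] at hb ⊢
    linarith

theorem isSaddlePointOn_lagrangian_iff [CompleteSpace Y] (ha : ∀ x y, a x y = a y x)
    (hpos : ∀ v, 0 ≤ a v v) (hF : ConvexOn ℝ univ F) {g : Y} {u : X} {ψ : Y}
    (hg : HasGradientAt F g ψ) :
    IsSaddlePointOn univ univ (lagrangian a l b F) u ψ ↔
      (∀ v, a u v + b v ψ = l v) ∧ ∀ w, b u w = ⟪g, w⟫ := by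
  rw [isSaddlePointOn_univ_iff, forall_lagrangian_le_left_iff ha hpos,
    forall_lagrangian_le_right_iff hF hg, and_comm]

variable (a l F) in
noncomputable def dualFunctional (S : Y →ₗ[ℝ] X) (φ : Y) : ℝ :=
  F φ + (1 / 2 * a (S φ) (S φ) - l (S φ))

theorem inner_add_eq_zero_of_forall_dualFunctional_le [CompleteSpace Y]
    (ha : ∀ x y, a x y = a y x) (S : Y →ₗ[ℝ] X) {ψ : Y}
    (hmin : ∀ φ, dualFunctional a l F S ψ ≤ dualFunctional a l F S φ) {g : Y}
    (hg : HasGradientAt F g ψ) (w : Y) : ⟪g, w⟫ + (a (S ψ) (S w) - l (S w)) = 0 := by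
  refine (hg.hasDerivAt_add_smul w).add_eq_zero_of_forall_le (γ := 1 / 2 * a (S w) (S w))
    fun t => ?_
  have := hmin (ψ + t • w)
  rw [dualFunctional, dualFunctional, map_add, map_smul, a.apply_add_smul_self ha] at this
  simp only [map_add, map_smul, smul_eq_mul, zero_smul, add_zero] at this ⊢
  linarith

end Lagrangian

section Existence

variable {X Y : Type*} [NormedAddCommGroup X] [NormedSpace ℝ X]
  [NormedAddCommGroup Y] [InnerProductSpace ℝ Y] [FiniteDimensional ℝ Y]
  {a : LinearMap.BilinForm ℝ X} {l : X →ₗ[ℝ] ℝ} {F : Y → ℝ} {gradF : Y → Y}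

theorem exists_forall_dualFunctional_le {C : ℝ} (hC : 0 < C) (hcoer : ∀ x, C * ‖x‖ ^ 2 ≤ a x x)
    (hF : ConvexOn ℝ univ F) (hgrad : ∀ φ, HasGradientAt F (gradF φ) φ) {S : Y →ₗ[ℝ] X}
    (hS : Injective S) :
    ∃ ψ, ∀ φ, dualFunctional a l F S ψ ≤ dualFunctional a l F S φ := by
  obtain ⟨c, hc, hcS⟩ := LinearMap.BilinForm.exists_pos_mul_sq_le_of_injective hC hcoer hS
  set f := (l ∘ₗ S).toContinuousLinearMap
  have hFc : Continuous F := continuous_iff_continuousAt.2 fun φ =>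
    (hgrad φ).differentiableAt.continuousAt
  refine exists_forall_le_of_quadratic_growth (c := c / 2) (M := ‖gradF 0‖ + ‖f‖) (k := F 0)
    (hFc.add ((continuous_const.mul (a.compl₁₂ S S).continuous_apply_self).sub f.continuous))
    (by positivity) fun φ => ?_
  have hF0 : F 0 - ‖gradF 0‖ * ‖φ‖ ≤ F φ := by
    have := hF.add_inner_le_of_hasGradientAt (hgrad 0) φ
    rw [sub_zero] at this
    linarith [neg_abs_le ⟪gradF 0, φ⟫, abs_real_inner_le_norm (gradF 0) φ]
  have hl : l (S φ) ≤ ‖f‖ * ‖φ‖ := (Real.le_norm_self _).trans (f.le_opNorm φ)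
  rw [dualFunctional]
  linarith [hcS φ]

theorem exists_isSaddlePointOn_lagrangian [FiniteDimensional ℝ X] (ha : ∀ x y, a x y = a y x)
    {C : ℝ} (hC : 0 < C) (hcoer : ∀ x, C * ‖x‖ ^ 2 ≤ a x x) (hF : ConvexOn ℝ univ F)
    (hgrad : ∀ φ, HasGradientAt F (gradF φ) φ) {b : X →ₗ[ℝ] Y →ₗ[ℝ] ℝ} (hb : b.SeparatingRight) :
    ∃ u ψ, IsSaddlePointOn univ univ (lagrangian a l b F) u ψ := by
  have hnd := LinearMap.BilinForm.nondegenerate_of_coercive hC hcoer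
  have hpos := LinearMap.BilinForm.apply_self_nonneg_of_coercive hC hcoer
  obtain ⟨S, hS⟩ : ∃ S : Y →ₗ[ℝ] X, ∀ φ v, a (S φ) v = b v φ :=
    ⟨(a.toDual hnd).symm.toLinearMap ∘ₗ b.flip, fun φ v => by simp⟩
  have hSinj : Injective S := (injective_iff_map_eq_zero S).2 fun φ hφ =>
    hb φ fun v => by rw [← hS, hφ, map_zero, LinearMap.zero_apply]
  obtain ⟨ψ, hψ⟩ := exists_forall_dualFunctional_le (l := l) hC hcoer hF hgrad hSinj
  obtain ⟨u, hu⟩ : ∃ u, ∀ v, a u v = l v - b v ψ :=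
    ⟨(a.toDual hnd).symm (l - b.flip ψ), fun v => by simp⟩
  refine ⟨u, ψ, (isSaddlePointOn_lagrangian_iff ha hpos hF (hgrad ψ)).2
    ⟨fun v => by rw [hu]; ring, fun w => ?_⟩⟩
  calc b u w = a (S w) u := (hS w u).symm
    _ = l (S w) - a (S ψ) (S w) := by rw [ha, hu, hS]
    _ = ⟪gradF ψ, w⟫ := by
      linarith [inner_add_eq_zero_of_forall_dualFunctional_le ha S hψ (hgrad ψ) w]

end Existence

/-- The Lagrangian `L(w, φ) = ½·a(w,w) − ℓ(w) + b(w,φ) − F(φ)` of the symmetric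
regularized proximal Galerkin subproblem admits a saddle point, and every saddle
point `(u, ψ)` satisfies the optimality system
`a(u,v) + b(v,ψ) = ℓ(v)` and `b(u,w) = ⟨∇F(ψ), w⟩`. -/
theorem statement5
    {X Y : Type*} [NormedAddCommGroup X] [InnerProductSpace ℝ X] [FiniteDimensional ℝ X]
    [NormedAddCommGroup Y] [InnerProductSpace ℝ Y] [FiniteDimensional ℝ Y]
    (a : X →ₗ[ℝ] X →ₗ[ℝ] ℝ) (hasymm : ∀ x y : X, a x y = a y x)
    (C : ℝ) (hC : 0 < C) (hacoer : ∀ x : X, C * ‖x‖ ^ 2 ≤ a x x)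
    (l : X →ₗ[ℝ] ℝ)
    (F : Y → ℝ) (hFconv : ConvexOn ℝ Set.univ F)
    (gradF : Y → Y) (hgrad : ∀ φ : Y, HasGradientAt F (gradF φ) φ)
    (b : X →ₗ[ℝ] Y →ₗ[ℝ] ℝ) (μ : ℝ) (hμ : 0 < μ)
    (hinfsup : ∀ φ : Y, φ ≠ 0 → ∃ x : X, x ≠ 0 ∧ μ * ‖x‖ * ‖φ‖ ≤ b x φ)
    (L : X → Y → ℝ)
    (hL : ∀ (w : X) (φ : Y), L w φ = (1 / 2) * a w w - l w + b w φ - F φ) :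
    (∃ (u : X) (ψ : Y), (∀ φ : Y, L u φ ≤ L u ψ) ∧ (∀ w : X, L u ψ ≤ L w ψ)) ∧
      (∀ (u : X) (ψ : Y),
        ((∀ φ : Y, L u φ ≤ L u ψ) ∧ (∀ w : X, L u ψ ≤ L w ψ)) →
          (∀ v : X, a u v + b v ψ = l v) ∧ (∀ w : Y, b u w = ⟪gradF ψ, w⟫)) := by
  obtain rfl : L = lagrangian a l b F := funext₂ hL
  have hpos := LinearMap.BilinForm.apply_self_nonneg_of_coercive hC hacoer
  simp_rw [← isSaddlePointOn_univ_iff]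
  exact ⟨exists_isSaddlePointOn_lagrangian hasymm hC hacoer hFconv hgrad
    (separatingRight_of_infSup hμ hinfsup),
    fun u ψ => (isSaddlePointOn_lagrangian_iff hasymm hpos hFconv (hgrad ψ)).1⟩
end

section
/- Let V and W be real Hilbert spaces, V_h ⊆ V and W_h ⊆ W subspaces, B : V → W a bounded linear map, A : V × V → ℝ bilinear with A(v,v) ≥ C·‖v‖² for all v (C > 0), f a continuous linear functional on V, and F : W → ℝ convex and differentiable with gradient ∇F : W → W. Let α > 0 and suppose u ∈ V_h, u₀ ∈ V_h and ψ, ψ⁻, ψ₀ ∈ W_h satisfy: (i) α·A(u, v) + ⟨B v, ψ − ψ⁻⟩ = α·f(v) for v = u − u₀; (ii) ⟨B u − ∇F(ψ), w⟩ = 0 and ⟨B u₀ − ∇F(ψ₀), w⟩ = 0 for w = ψ − ψ⁻. Then, with the Bregman distance D(χ, φ) := F(χ) − F(φ) − ⟨∇F(φ), χ − φ⟩, one has C·α·‖u‖² + D(ψ, ψ₀) − D(ψ⁻, ψ₀) ≤ α·(A(u, u₀) + f(u − u₀)). -/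
/-!
A convex differentiable function lies above its tangent planes, so the difference
`D(ψ, ψ₀) − D(ψ⁻, ψ₀)` of Bregman distances is at most `⟨∇F(ψ) − ∇F(ψ₀), ψ − ψ⁻⟩`. The two
relations (ii) identify this pairing with `⟨B(u − u₀), ψ − ψ⁻⟩`, which (i) expresses through
`A` and `f`; coercivity of `A` then bounds `α·A(u, u)` from below by `C·α·‖u‖²`.
-/

open scoped RealInnerProductSpace

theorem ConvexOn.add_fderiv_le {E : Type*} [NormedAddCommGroup E] [NormedSpace ℝ E]
    {s : Set E} {f : E → ℝ} {f' : E →L[ℝ] ℝ} {x y : E} (hf : ConvexOn ℝ s f)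
    (hx : x ∈ s) (hy : y ∈ s) (hf' : HasFDerivAt f f' x) :
    f x + f' (y - x) ≤ f y := by
  set L : ℝ →ᵃ[ℝ] E := AffineMap.lineMap x y
  have hL0 : L 0 = x := AffineMap.lineMap_apply_zero x y
  have hL1 : L 1 = y := AffineMap.lineMap_apply_one x y
  have hline : ConvexOn ℝ (L ⁻¹' s) (f ∘ L) := hf.comp_affineMap L
  have hL : HasDerivAt L (y - x) 0 := AffineMap.hasDerivAt_lineMap
  have hderiv : HasDerivAt (f ∘ L) (f' (y - x)) 0 := by
    rw [← hL0] at hf'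
    exact hf'.comp_hasDerivAt 0 hL
  have hslope := hline.le_slope_of_hasDerivAt (x := 0) (y := 1)
    (by simpa [hL0] using hx) (by simpa [hL1] using hy) one_pos hderiv
  simp only [slope_def_field, Function.comp_apply, hL0, hL1, sub_zero, div_one] at hslope
  linarith

section Bregman

variable {W : Type*} [NormedAddCommGroup W] [InnerProductSpace ℝ W]

def bregmanDist (F : W → ℝ) (gradF : W → W) (χ φ : W) : ℝ :=
  F χ - F φ - ⟪gradF φ, χ - φ⟫

theorem bregmanDist_sub_bregmanDist (F : W → ℝ) (gradF : W → W) (χ χ' φ : W) :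
    bregmanDist F gradF χ φ - bregmanDist F gradF χ' φ = F χ - F χ' - ⟪gradF φ, χ - χ'⟫ := by
  simp only [bregmanDist, ← sub_sub_sub_cancel_right χ χ' φ, inner_sub_right]
  ring

variable [CompleteSpace W]

theorem ConvexOn.add_inner_le_of_hasGradientAt_s6 {s : Set W} {F : W → ℝ} {g x y : W}
    (hF : ConvexOn ℝ s F) (hx : x ∈ s) (hy : y ∈ s) (hg : HasGradientAt F g x) :
    F x + ⟪g, y - x⟫ ≤ F y := by
  simpa using hF.add_fderiv_le hx hy hg.hasFDerivAt

theorem bregmanDist_sub_bregmanDist_le {s : Set W} {F : W → ℝ} {gradF : W → W} {χ χ' : W}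
    (hF : ConvexOn ℝ s F) (hχ : χ ∈ s) (hχ' : χ' ∈ s) (hgrad : HasGradientAt F (gradF χ) χ)
    (φ : W) :
    bregmanDist F gradF χ φ - bregmanDist F gradF χ' φ ≤ ⟪gradF χ - gradF φ, χ - χ'⟫ := by
  have htangent := hF.add_inner_le_of_hasGradientAt_s6 hχ hχ' hgrad
  rw [← neg_sub χ χ', inner_neg_right] at htangent
  rw [bregmanDist_sub_bregmanDist, inner_sub_left]
  linarith

end Bregman

theorem statement6_general
    {V W : Type*} [NormedAddCommGroup V] [InnerProductSpace ℝ V]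
    [NormedAddCommGroup W] [InnerProductSpace ℝ W] [CompleteSpace W]
    (B : V →L[ℝ] W)
    (A : V →ₗ[ℝ] V →ₗ[ℝ] ℝ) (C : ℝ)
    (hAcoer : ∀ v : V, C * ‖v‖ ^ 2 ≤ A v v)
    (f : V →L[ℝ] ℝ)
    (F : W → ℝ) (hFconv : ConvexOn ℝ Set.univ F)
    (gradF : W → W) (hgrad : ∀ φ : W, HasGradientAt F (gradF φ) φ)
    (α : ℝ) (hα : 0 < α)
    (u u0 : V)
    (ψ ψm ψ0 : W)
    (hi : α * A u (u - u0) + ⟪B (u - u0), ψ - ψm⟫ = α * f (u - u0))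
    (hii1 : ⟪B u - gradF ψ, ψ - ψm⟫ = 0)
    (hii2 : ⟪B u0 - gradF ψ0, ψ - ψm⟫ = 0)
    (D : W → W → ℝ) (hD : ∀ χ φ : W, D χ φ = F χ - F φ - ⟪gradF φ, χ - φ⟫) :
    C * α * ‖u‖ ^ 2 + D ψ ψ0 - D ψm ψ0 ≤ α * (A u u0 + f (u - u0)) := by
  obtain rfl : D = bregmanDist F gradF := funext₂ hD
  have hbregman :=
    bregmanDist_sub_bregmanDist_le hFconv (Set.mem_univ ψ) (Set.mem_univ ψm) (hgrad ψ) ψ0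
  have hpairing : ⟪B (u - u0), ψ - ψm⟫ = ⟪gradF ψ - gradF ψ0, ψ - ψm⟫ := by
    rw [inner_sub_left] at hii1 hii2 ⊢
    rw [map_sub, inner_sub_left]
    linarith
  have hcoer : α * (C * ‖u‖ ^ 2) ≤ α * A u u := mul_le_mul_of_nonneg_left (hAcoer u) hα.le
  rw [map_sub] at hi
  linarith

/-- Per-iteration energy inequality of the conforming proximal Galerkin scheme:
with the Bregman distance `D(χ, φ) = F(χ) − F(φ) − ⟨∇F(φ), χ − φ⟩`, one step of
the scheme satisfies
`C·α·‖u‖² + D(ψ, ψ₀) − D(ψ⁻, ψ₀) ≤ α·(A(u, u₀) + f(u − u₀))`. -/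
theorem statement6
    {V W : Type*} [NormedAddCommGroup V] [InnerProductSpace ℝ V] [CompleteSpace V]
    [NormedAddCommGroup W] [InnerProductSpace ℝ W] [CompleteSpace W]
    (Vh : Submodule ℝ V) (Wh : Submodule ℝ W)
    (B : V →L[ℝ] W)
    (A : V →ₗ[ℝ] V →ₗ[ℝ] ℝ) (C : ℝ) (hC : 0 < C)
    (hAcoer : ∀ v : V, C * ‖v‖ ^ 2 ≤ A v v)
    (f : V →L[ℝ] ℝ)
    (F : W → ℝ) (hFconv : ConvexOn ℝ Set.univ F)
    (gradF : W → W) (hgrad : ∀ φ : W, HasGradientAt F (gradF φ) φ)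
    (α : ℝ) (hα : 0 < α)
    (u u0 : V) (hu : u ∈ Vh) (hu0 : u0 ∈ Vh)
    (ψ ψm ψ0 : W) (hψ : ψ ∈ Wh) (hψm : ψm ∈ Wh) (hψ0 : ψ0 ∈ Wh)
    (hi : α * A u (u - u0) + ⟪B (u - u0), ψ - ψm⟫ = α * f (u - u0))
    (hii1 : ⟪B u - gradF ψ, ψ - ψm⟫ = 0)
    (hii2 : ⟪B u0 - gradF ψ0, ψ - ψm⟫ = 0)
    (D : W → W → ℝ) (hD : ∀ χ φ : W, D χ φ = F χ - F φ - ⟪gradF φ, χ - φ⟫) :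
    C * α * ‖u‖ ^ 2 + D ψ ψ0 - D ψm ψ0 ≤ α * (A u u0 + f (u - u0)) :=
  statement6_general B A C hAcoer f F hFconv gradF hgrad α hα u u0 ψ ψm ψ0 hi hii1 hii2 D hD
end

section
/- Let V and W be real Hilbert spaces, V_h ⊆ V and W_h ⊆ W subspaces, B : V → W a bounded linear map, A : V × V → ℝ bilinear with |A(u,v)| ≤ M·‖u‖·‖v‖ and A(v,v) ≥ C·‖v‖² for all u, v (M, C > 0), f a continuous linear functional on V with operator norm ‖f‖, and F : W → ℝ convex and differentiable with gradient ∇F : W → W. Let α_k > 0 (1 ≤ k ≤ ℓ), ψ₀ ∈ W_h, and let (u_k, ψ_k) ∈ V_h × W_h for 1 ≤ k ≤ ℓ satisfy, for every k: α_k·A(u_k, v) + ⟨B v, ψ_k − ψ_{k−1}⟩ = α_k·f(v) for all v ∈ V_h, and ⟨B u_k − ∇F(ψ_k), w⟩ = 0 for all w ∈ W_h. Suppose further u₀ ∈ V_h satisfies ⟨B u₀ − ∇F(ψ₀), w⟩ = 0 for all w ∈ W_h. Then the weighted average ū_ℓ = (Σ_{k=1}^ℓ α_k u_k)/(Σ_{k=1}^ℓ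 α_k) satisfies C·‖ū_ℓ‖² ≤ M·‖ū_ℓ‖·‖u₀‖ + ‖f‖·(‖ū_ℓ‖ + ‖u₀‖). -/
/-!
Testing the primal equation of step `k` with `u_k - u₀` and the latent equation with
`ψ_k - ψ_{k-1}` gives `α_k (A(u_k, u_k - u₀) - f(u_k - u₀)) = -⟪∇F ψ_k - ∇F ψ₀, ψ_k - ψ_{k-1}⟫`.
Summed over `k`, the right-hand side is nonpositive: it telescopes down to minus the Bregman
divergence of `F` between `ψ_ℓ` and `ψ₀`. Since `v ↦ A(v, v)` is convex, Jensen's inequality turns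
the summed estimate into `A(ū, ū) ≤ A(ū, u₀) + f(ū - u₀)`, and coercivity and continuity of `A`
and `f` conclude.
-/

open scoped RealInnerProductSpace

open Finset

theorem ConvexOn.add_apply_sub_le_of_hasFDerivAt {E : Type*} [NormedAddCommGroup E]
    [NormedSpace ℝ E] {s : Set E} {F : E → ℝ} {F' : E →L[ℝ] ℝ} {x y : E}
    (hF : ConvexOn ℝ s F) (hx : x ∈ s) (hy : y ∈ s) (hF' : HasFDerivAt F F' x) :
    F x + F' (y - x) ≤ F y := by
  let g : ℝ →ᵃ[ℝ] E := AffineMap.lineMap x y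
  have hg : ConvexOn ℝ (g ⁻¹' s) (F ∘ g) := hF.comp_affineMap g
  have hderiv : HasDerivAt (F ∘ g) (F' (y - x)) 0 := by
    have hF'0 : HasFDerivAt F F' (g 0) := by simpa [g] using hF'
    exact hF'0.comp_hasDerivAt 0 AffineMap.hasDerivAt_lineMap
  have := hg.le_slope_of_hasDerivAt (by simpa [g] using hx) (by simpa [g] using hy)
    zero_lt_one hderiv
  simp only [map_sub, slope_def_field, Function.comp_apply, AffineMap.lineMap_apply_one,
    AffineMap.lineMap_apply_zero, sub_zero, div_one, tsub_le_iff_right, g] at this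
  rw [map_sub]
  linarith

theorem ConvexOn.add_inner_gradient_le {W : Type*} [NormedAddCommGroup W]
    [InnerProductSpace ℝ W] [CompleteSpace W] {s : Set W} {F : W → ℝ} {g x y : W}
    (hF : ConvexOn ℝ s F) (hx : x ∈ s) (hy : y ∈ s) (hg : HasGradientAt F g x) :
    F x + ⟪g, y - x⟫ ≤ F y :=
  hF.add_apply_sub_le_of_hasFDerivAt hx hy hg.hasFDerivAt

section Gradient

variable {W : Type*} [NormedAddCommGroup W] [InnerProductSpace ℝ W] [CompleteSpace W]
  {F : W → ℝ} {gradF : W → W}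

theorem ConvexOn.bregman_le_sum_inner_gradient_sub (hF : ConvexOn ℝ Set.univ F)
    (hgrad : ∀ x, HasGradientAt F (gradF x) x) (ψ : ℕ → W) (ℓ : ℕ) :
    F (ψ ℓ) - F (ψ 0) - ⟪gradF (ψ 0), ψ ℓ - ψ 0⟫ ≤
      ∑ k ∈ Icc 1 ℓ, ⟪gradF (ψ k) - gradF (ψ 0), ψ k - ψ (k - 1)⟫ := by
  induction ℓ with
  | zero => simp
  | succ ℓ ih =>
    have hstep := hF.add_inner_gradient_le trivial trivial (hgrad (ψ (ℓ + 1))) (y := ψ ℓ)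
    rw [sum_Icc_succ_top (by omega), Nat.add_sub_cancel]
    simp only [inner_sub_left, inner_sub_right] at hstep ih ⊢
    linarith

theorem ConvexOn.sum_inner_gradient_sub_nonneg (hF : ConvexOn ℝ Set.univ F)
    (hgrad : ∀ x, HasGradientAt F (gradF x) x) (ψ : ℕ → W) (ℓ : ℕ) :
    0 ≤ ∑ k ∈ Icc 1 ℓ, ⟪gradF (ψ k) - gradF (ψ 0), ψ k - ψ (k - 1)⟫ := by
  have := hF.add_inner_gradient_le trivial trivial (hgrad (ψ 0)) (y := ψ ℓ)
  linarith [hF.bregman_le_sum_inner_gradient_sub hgrad ψ ℓ]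

end Gradient

section BilinearForm

variable {E : Type*} [AddCommGroup E] [Module ℝ E] (A : E →ₗ[ℝ] E →ₗ[ℝ] ℝ)

theorem LinearMap.convexOn_apply_self (hA : ∀ v, 0 ≤ A v v) :
    ConvexOn ℝ Set.univ fun v ↦ A v v := by
  refine ⟨convex_univ, fun x _ y _ a b ha hb hab ↦ ?_⟩
  have := mul_nonneg (mul_nonneg ha hb) (hA (x - y))
  simp only [map_add, map_smul, map_sub, LinearMap.add_apply, LinearMap.smul_apply,
    LinearMap.sub_apply, smul_eq_mul] at this ⊢
  rw [← sub_nonneg]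
  obtain rfl : b = 1 - a := by linarith
  linear_combination this

theorem LinearMap.apply_centerMass_self_le_of_sum_le {ι : Type*} (hA : ∀ v, 0 ≤ A v v)
    (f : E →ₗ[ℝ] ℝ) {s : Finset ι} {w : ι → ℝ} (hw : ∀ i ∈ s, 0 ≤ w i)
    (hS : 0 < ∑ i ∈ s, w i) (x : ι → E) (y : E)
    (h : ∑ i ∈ s, w i * A (x i) (x i - y) ≤ ∑ i ∈ s, w i * f (x i - y)) :
    A (s.centerMass w x) (s.centerMass w x) ≤
      A (s.centerMass w x) y + f (s.centerMass w x - y) := by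
  set c := s.centerMass w x
  set S := ∑ i ∈ s, w i
  have hsum : ∑ i ∈ s, w i • x i = S • c := (smul_inv_smul₀ hS.ne' _).symm
  have hjensen : S * A c c ≤ ∑ i ∈ s, w i * A (x i) (x i) := by
    have : A c c ≤ S⁻¹ * ∑ i ∈ s, w i * A (x i) (x i) :=
      (A.convexOn_apply_self hA).map_centerMass_le hw hS (fun _ _ ↦ trivial)
    rwa [le_inv_mul_iff₀ hS] at this
  have hA_sum : ∑ i ∈ s, w i * A (x i) y = S * A c y := by
    simpa using congrArg (fun v ↦ A v y) hsum
  have hf_sum : ∑ i ∈ s, w i * f (x i) = S * f c := by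
    simpa using congrArg f hsum
  simp only [map_sub, mul_sub, sum_sub_distrib, hA_sum, hf_sum, ← sum_mul] at h
  rw [map_sub]
  exact le_of_mul_le_mul_left (by linarith) hS

end BilinearForm

theorem proximalGalerkin_step_energy_eq {V W : Type*} [NormedAddCommGroup V]
    [InnerProductSpace ℝ V] [NormedAddCommGroup W] [InnerProductSpace ℝ W]
    {Vh : Submodule ℝ V} {Wh : Submodule ℝ W} (B : V →L[ℝ] W) (A : V →ₗ[ℝ] V →ₗ[ℝ] ℝ)
    (f : V →L[ℝ] ℝ) {a : ℝ} {u u₀ : V} {g g₀ δ : W} (hu : u ∈ Vh) (hu₀ : u₀ ∈ Vh) (hδ : δ ∈ Wh)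
    (hscheme : ∀ v ∈ Vh, a * A u v + ⟪B v, δ⟫ = a * f v)
    (hlatent : ∀ w ∈ Wh, ⟪B u - g, w⟫ = 0) (hlatent₀ : ∀ w ∈ Wh, ⟪B u₀ - g₀, w⟫ = 0) :
    a * A u (u - u₀) - a * f (u - u₀) = -⟪g - g₀, δ⟫ := by
  have h := hscheme _ (Vh.sub_mem hu hu₀)
  have h₁ := hlatent δ hδ
  have h₀ := hlatent₀ δ hδ
  rw [inner_sub_left] at h₁ h₀
  rw [B.map_sub, inner_sub_left] at h
  rw [inner_sub_left]
  linarith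

theorem statement7_general
    {V W : Type*} [NormedAddCommGroup V] [InnerProductSpace ℝ V]
    [NormedAddCommGroup W] [InnerProductSpace ℝ W] [CompleteSpace W]
    (Vh : Submodule ℝ V) (Wh : Submodule ℝ W)
    (B : V →L[ℝ] W)
    (A : V →ₗ[ℝ] V →ₗ[ℝ] ℝ) (M C : ℝ) (hC : 0 < C)
    (hAbdd : ∀ u v : V, |A u v| ≤ M * ‖u‖ * ‖v‖)
    (hAcoer : ∀ v : V, C * ‖v‖ ^ 2 ≤ A v v)
    (f : V →L[ℝ] ℝ)
    (F : W → ℝ) (hFconv : ConvexOn ℝ Set.univ F)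
    (gradF : W → W) (hgrad : ∀ φ : W, HasGradientAt F (gradF φ) φ)
    (ℓ : ℕ) (hℓ : 1 ≤ ℓ)
    (α : ℕ → ℝ) (hα : ∀ k, 1 ≤ k → k ≤ ℓ → 0 < α k)
    (u : ℕ → V) (ψ : ℕ → W)
    (hu0mem : u 0 ∈ Vh) (hψ0mem : ψ 0 ∈ Wh)
    (humem : ∀ k, 1 ≤ k → k ≤ ℓ → u k ∈ Vh)
    (hψmem : ∀ k, 1 ≤ k → k ≤ ℓ → ψ k ∈ Wh)
    (hscheme : ∀ k, 1 ≤ k → k ≤ ℓ → ∀ v ∈ Vh,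
      α k * A (u k) v + ⟪B v, ψ k - ψ (k - 1)⟫ = α k * f v)
    (hlatent : ∀ k, 1 ≤ k → k ≤ ℓ → ∀ w ∈ Wh, ⟪B (u k) - gradF (ψ k), w⟫ = 0)
    (hlatent0 : ∀ w ∈ Wh, ⟪B (u 0) - gradF (ψ 0), w⟫ = 0)
    (ubar : V)
    (hubar : ubar =
      (∑ k ∈ Finset.Icc 1 ℓ, α k)⁻¹ • ∑ k ∈ Finset.Icc 1 ℓ, α k • u k) :
    C * ‖ubar‖ ^ 2 ≤ M * ‖ubar‖ * ‖u 0‖ + ‖f‖ * (‖ubar‖ + ‖u 0‖) := by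
  have hαI : ∀ k ∈ Icc 1 ℓ, 0 < α k := fun k hk ↦ hα k (mem_Icc.1 hk).1 (mem_Icc.1 hk).2
  have hstep : ∀ k ∈ Icc 1 ℓ, α k * A (u k) (u k - u 0) - α k * f (u k - u 0) =
      -⟪gradF (ψ k) - gradF (ψ 0), ψ k - ψ (k - 1)⟫ := by
    intro k hk
    obtain ⟨hk1, hkℓ⟩ := mem_Icc.1 hk
    have hprev : ψ (k - 1) ∈ Wh := by
      rcases hk1.eq_or_lt with rfl | hk1
      · exact hψ0mem
      · exact hψmem _ (by omega) (by omega)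
    exact proximalGalerkin_step_energy_eq B A f (humem k hk1 hkℓ) hu0mem
      (Wh.sub_mem (hψmem k hk1 hkℓ) hprev) (hscheme k hk1 hkℓ) (hlatent k hk1 hkℓ) hlatent0
  have hsum : ∑ k ∈ Icc 1 ℓ, α k * A (u k) (u k - u 0) ≤
      ∑ k ∈ Icc 1 ℓ, α k * f (u k - u 0) := by
    rw [← sub_nonpos, ← sum_sub_distrib, sum_congr rfl hstep, sum_neg_distrib, neg_nonpos]
    exact hFconv.sum_inner_gradient_sub_nonneg hgrad ψ ℓ
  have henergy := A.apply_centerMass_self_le_of_sum_le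
    (fun v ↦ (mul_nonneg hC.le (sq_nonneg _)).trans (hAcoer v)) f.toLinearMap
    (fun k hk ↦ (hαI k hk).le) (sum_pos hαI (nonempty_Icc.2 hℓ)) u (u 0) hsum
  rw [show (Icc 1 ℓ).centerMass α u = ubar from hubar.symm] at henergy
  calc C * ‖ubar‖ ^ 2 ≤ A ubar ubar := hAcoer _
    _ ≤ A ubar (u 0) + f (ubar - u 0) := henergy
    _ ≤ M * ‖ubar‖ * ‖u 0‖ + ‖f‖ * ‖ubar - u 0‖ :=
      add_le_add ((le_abs_self _).trans (hAbdd _ _)) ((Real.le_norm_self _).trans (f.le_opNorm _))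
    _ ≤ _ := by gcongr; exact norm_sub_le _ _

/-- Stability of the weighted primal averages of the conforming proximal
Galerkin scheme: the weighted average `ū_ℓ = (Σ α_k u_k)/(Σ α_k)` satisfies
`C·‖ū_ℓ‖² ≤ M·‖ū_ℓ‖·‖u₀‖ + ‖f‖·(‖ū_ℓ‖ + ‖u₀‖)`. -/
theorem statement7
    {V W : Type*} [NormedAddCommGroup V] [InnerProductSpace ℝ V] [CompleteSpace V]
    [NormedAddCommGroup W] [InnerProductSpace ℝ W] [CompleteSpace W]
    (Vh : Submodule ℝ V) (Wh : Submodule ℝ W)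
    (B : V →L[ℝ] W)
    (A : V →ₗ[ℝ] V →ₗ[ℝ] ℝ) (M C : ℝ) (hM : 0 < M) (hC : 0 < C)
    (hAbdd : ∀ u v : V, |A u v| ≤ M * ‖u‖ * ‖v‖)
    (hAcoer : ∀ v : V, C * ‖v‖ ^ 2 ≤ A v v)
    (f : V →L[ℝ] ℝ)
    (F : W → ℝ) (hFconv : ConvexOn ℝ Set.univ F)
    (gradF : W → W) (hgrad : ∀ φ : W, HasGradientAt F (gradF φ) φ)
    (ℓ : ℕ) (hℓ : 1 ≤ ℓ)
    (α : ℕ → ℝ) (hα : ∀ k, 1 ≤ k → k ≤ ℓ → 0 < α k)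
    (u : ℕ → V) (ψ : ℕ → W)
    (hu0mem : u 0 ∈ Vh) (hψ0mem : ψ 0 ∈ Wh)
    (humem : ∀ k, 1 ≤ k → k ≤ ℓ → u k ∈ Vh)
    (hψmem : ∀ k, 1 ≤ k → k ≤ ℓ → ψ k ∈ Wh)
    (hscheme : ∀ k, 1 ≤ k → k ≤ ℓ → ∀ v ∈ Vh,
      α k * A (u k) v + ⟪B v, ψ k - ψ (k - 1)⟫ = α k * f v)
    (hlatent : ∀ k, 1 ≤ k → k ≤ ℓ → ∀ w ∈ Wh, ⟪B (u k) - gradF (ψ k), w⟫ = 0)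
    (hlatent0 : ∀ w ∈ Wh, ⟪B (u 0) - gradF (ψ 0), w⟫ = 0)
    (ubar : V)
    (hubar : ubar =
      (∑ k ∈ Finset.Icc 1 ℓ, α k)⁻¹ • ∑ k ∈ Finset.Icc 1 ℓ, α k • u k) :
    C * ‖ubar‖ ^ 2 ≤ M * ‖ubar‖ * ‖u 0‖ + ‖f‖ * (‖ubar‖ + ‖u 0‖) :=
  statement7_general Vh Wh B A M C hC hAbdd hAcoer f F hFconv gradF hgrad ℓ hℓ α hα u ψ hu0mem
    hψ0mem humem hψmem hscheme hlatent hlatent0 ubar hubar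
end

section
/- Let V and W be real Hilbert spaces, V_h ⊆ V and W_h ⊆ W subspaces, B : V → W a bounded linear map, A : V × V → ℝ bilinear with |A(u,v)| ≤ M·‖u‖·‖v‖ for all u, v, and f a continuous linear functional on V with operator norm ‖f‖. Let α_k > 0 (1 ≤ k ≤ ℓ), ψ₀ ∈ W_h, and let (u_k, ψ_k) ∈ V_h × W_h satisfy α_k·A(u_k, v) + ⟨B v, ψ_k − ψ_{k−1}⟩ = α_k·f(v) for all v ∈ V_h and all 1 ≤ k ≤ ℓ. Set ū_ℓ = (Σ_{k=1}^ℓ α_k u_k)/(Σ_{k=1}^ℓ α_k) and λ̄_ℓ = (ψ₀ − ψ_ℓ)/(Σ_{k=1}^ℓ α_k). If there is μ > 0 such that for every nonzero w ∈ W_h there is a nonzero v ∈ V_h with ⟨B v, w⟩ ≥ μ·‖v‖·‖w‖, then μ·‖λ̄_ℓ‖ ≤ M·‖ū_ℓ‖ + ‖f‖. -/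
/-!
Summing the scheme over `k = 1, …, ℓ` telescopes the dual increments, so `λ̄_ℓ` represents the
residual `v ↦ A(ū_ℓ, v) − f(v)` on `V_h`: `⟪B v, λ̄_ℓ⟫ = A(ū_ℓ, v) − f(v)`. This functional has
norm at most `M‖ū_ℓ‖ + ‖f‖`, and the inf-sup condition bounds `μ‖λ̄_ℓ‖` by the norm of
`v ↦ ⟪B v, λ̄_ℓ⟫` on `V_h`.
-/

open Finset
open scoped RealInnerProductSpace

section

variable {V W : Type*} [NormedAddCommGroup V] [InnerProductSpace ℝ V]
  [NormedAddCommGroup W] [InnerProductSpace ℝ W]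

def InfSupCondition (Vh : Submodule ℝ V) (Wh : Submodule ℝ W) (B : V →L[ℝ] W) (μ : ℝ) : Prop :=
  ∀ w ∈ Wh, w ≠ 0 → ∃ v ∈ Vh, v ≠ 0 ∧ μ * ‖v‖ * ‖w‖ ≤ ⟪B v, w⟫

theorem InfSupCondition.mul_norm_le {Vh : Submodule ℝ V} {Wh : Submodule ℝ W} {B : V →L[ℝ] W}
    {μ C : ℝ} (hinfsup : InfSupCondition Vh Wh B μ) {w : W} (hw : w ∈ Wh) (hC : 0 ≤ C)
    (hbound : ∀ v ∈ Vh, ⟪B v, w⟫ ≤ C * ‖v‖) : μ * ‖w‖ ≤ C := by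
  rcases eq_or_ne w 0 with rfl | hw0
  · simpa using hC
  obtain ⟨v, hv, hv0, hle⟩ := hinfsup w hw hw0
  have hvpos : 0 < ‖v‖ := norm_pos_iff.mpr hv0
  have : μ * ‖w‖ * ‖v‖ ≤ C * ‖v‖ := by linarith [hbound v hv]
  exact le_of_mul_le_mul_right this hvpos

theorem mul_norm_nonneg_of_abs_apply_le {A : V →ₗ[ℝ] V →ₗ[ℝ] ℝ} {M : ℝ}
    (hA : ∀ u v : V, |A u v| ≤ M * ‖u‖ * ‖v‖) (u : V) : 0 ≤ M * ‖u‖ := by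
  rcases eq_or_ne u 0 with rfl | hu
  · simp
  have : 0 ≤ M * ‖u‖ * ‖u‖ := (abs_nonneg _).trans (hA u u)
  exact nonneg_of_mul_nonneg_left this (norm_pos_iff.mpr hu)

theorem apply_sub_apply_le {A : V →ₗ[ℝ] V →ₗ[ℝ] ℝ} {M : ℝ}
    (hA : ∀ u v : V, |A u v| ≤ M * ‖u‖ * ‖v‖) (f : V →L[ℝ] ℝ) (u v : V) :
    A u v - f v ≤ (M * ‖u‖ + ‖f‖) * ‖v‖ := by
  have hAuv : A u v ≤ M * ‖u‖ * ‖v‖ := (le_abs_self _).trans (hA u v)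
  have hfv : -f v ≤ ‖f‖ * ‖v‖ := (neg_le_abs _).trans (by simpa using f.le_opNorm v)
  linarith

theorem sum_Icc_one_sub_pred {G : Type*} [AddCommGroup G] (ψ : ℕ → G) (n : ℕ) :
    ∑ k ∈ Icc 1 n, (ψ k - ψ (k - 1)) = ψ n - ψ 0 := by
  rw [← Ico_add_one_right_eq_Icc, sum_Ico_eq_sum_range]
  simpa [add_comm] using sum_range_sub ψ n

theorem inner_smul_sub_eq_of_forall_mul_add_inner_sub {α a : ℕ → ℝ} {b : ℝ} {w : W}
    {ψ : ℕ → W} {ℓ : ℕ} (hS : ∑ k ∈ Icc 1 ℓ, α k ≠ 0)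
    (h : ∀ k ∈ Icc 1 ℓ, α k * a k + ⟪w, ψ k - ψ (k - 1)⟫ = α k * b) :
    ⟪w, (∑ k ∈ Icc 1 ℓ, α k)⁻¹ • (ψ 0 - ψ ℓ)⟫ =
      (∑ k ∈ Icc 1 ℓ, α k)⁻¹ * ∑ k ∈ Icc 1 ℓ, α k * a k - b := by
  have hsum : ∑ k ∈ Icc 1 ℓ, α k * a k + ⟪w, ψ ℓ - ψ 0⟫ = (∑ k ∈ Icc 1 ℓ, α k) * b := by
    rw [← sum_Icc_one_sub_pred, inner_sum, ← sum_add_distrib, sum_mul]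
    exact sum_congr rfl h
  rw [real_inner_smul_right, ← neg_sub, inner_neg_right]
  field_simp
  linarith

theorem inner_averaged_multiplier_eq (Vh : Submodule ℝ V) (B : V →L[ℝ] W)
    (A : V →ₗ[ℝ] V →ₗ[ℝ] ℝ) (f : V →L[ℝ] ℝ) {ℓ : ℕ} {α : ℕ → ℝ} {u : ℕ → V} {ψ : ℕ → W}
    (hscheme : ∀ k, 1 ≤ k → k ≤ ℓ → ∀ v ∈ Vh,
      α k * A (u k) v + ⟪B v, ψ k - ψ (k - 1)⟫ = α k * f v)
    (hS : ∑ k ∈ Icc 1 ℓ, α k ≠ 0) {v : V} (hv : v ∈ Vh) :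
    ⟪B v, (∑ k ∈ Icc 1 ℓ, α k)⁻¹ • (ψ 0 - ψ ℓ)⟫ =
      A ((∑ k ∈ Icc 1 ℓ, α k)⁻¹ • ∑ k ∈ Icc 1 ℓ, α k • u k) v - f v := by
  rw [inner_smul_sub_eq_of_forall_mul_add_inner_sub hS
    fun k hk ↦ hscheme k (mem_Icc.mp hk).1 (mem_Icc.mp hk).2 v hv]
  simp [map_sum]

end

theorem statement8_general
    {V W : Type*} [NormedAddCommGroup V] [InnerProductSpace ℝ V]
    [NormedAddCommGroup W] [InnerProductSpace ℝ W]
    (Vh : Submodule ℝ V) (Wh : Submodule ℝ W)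
    (B : V →L[ℝ] W)
    (A : V →ₗ[ℝ] V →ₗ[ℝ] ℝ) (M : ℝ)
    (hAbdd : ∀ u v : V, |A u v| ≤ M * ‖u‖ * ‖v‖)
    (f : V →L[ℝ] ℝ)
    (ℓ : ℕ)
    (α : ℕ → ℝ)
    (u : ℕ → V) (ψ : ℕ → W)
    (hψmem : ∀ k, k ≤ ℓ → ψ k ∈ Wh)
    (hscheme : ∀ k, 1 ≤ k → k ≤ ℓ → ∀ v ∈ Vh,
      α k * A (u k) v + ⟪B v, ψ k - ψ (k - 1)⟫ = α k * f v)
    (ubar : V)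
    (hubar : ubar =
      (∑ k ∈ Finset.Icc 1 ℓ, α k)⁻¹ • ∑ k ∈ Finset.Icc 1 ℓ, α k • u k)
    (lambar : W)
    (hlambar : lambar = (∑ k ∈ Finset.Icc 1 ℓ, α k)⁻¹ • (ψ 0 - ψ ℓ))
    (μ : ℝ)
    (hinfsup : ∀ w ∈ Wh, w ≠ 0 → ∃ v ∈ Vh, v ≠ 0 ∧ μ * ‖v‖ * ‖w‖ ≤ ⟪B v, w⟫) :
    μ * ‖lambar‖ ≤ M * ‖ubar‖ + ‖f‖ := by
  have hmem : lambar ∈ Wh :=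
    hlambar ▸ Wh.smul_mem _ (Wh.sub_mem (hψmem 0 ℓ.zero_le) (hψmem ℓ le_rfl))
  have hC : 0 ≤ M * ‖ubar‖ + ‖f‖ :=
    add_nonneg (mul_norm_nonneg_of_abs_apply_le hAbdd ubar) (norm_nonneg f)
  refine InfSupCondition.mul_norm_le hinfsup hmem hC fun v hv ↦ ?_
  rcases eq_or_ne (∑ k ∈ Icc 1 ℓ, α k) 0 with hS | hS
  · -- with zero total weight, `λ̄_ℓ = 0⁻¹ • _ = 0`
    simp only [hlambar, hS, inv_zero, zero_smul, inner_zero_right]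
    positivity
  · rw [hlambar, inner_averaged_multiplier_eq Vh B A f hscheme hS hv, ← hubar]
    exact apply_sub_apply_le hAbdd f ubar v

/-- Stability of the averaged dual variable `λ̄_ℓ = (ψ₀ − ψ_ℓ)/(Σ α_k)` of the
proximal Galerkin scheme: under the discrete inf-sup condition with constant `μ`,
one has `μ·‖λ̄_ℓ‖ ≤ M·‖ū_ℓ‖ + ‖f‖`. -/
theorem statement8
    {V W : Type*} [NormedAddCommGroup V] [InnerProductSpace ℝ V] [CompleteSpace V]
    [NormedAddCommGroup W] [InnerProductSpace ℝ W] [CompleteSpace W]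
    (Vh : Submodule ℝ V) (Wh : Submodule ℝ W)
    (B : V →L[ℝ] W)
    (A : V →ₗ[ℝ] V →ₗ[ℝ] ℝ) (M : ℝ)
    (hAbdd : ∀ u v : V, |A u v| ≤ M * ‖u‖ * ‖v‖)
    (f : V →L[ℝ] ℝ)
    (ℓ : ℕ) (hℓ : 1 ≤ ℓ)
    (α : ℕ → ℝ) (hα : ∀ k, 1 ≤ k → k ≤ ℓ → 0 < α k)
    (u : ℕ → V) (ψ : ℕ → W)
    (humem : ∀ k, 1 ≤ k → k ≤ ℓ → u k ∈ Vh)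
    (hψmem : ∀ k, k ≤ ℓ → ψ k ∈ Wh)
    (hscheme : ∀ k, 1 ≤ k → k ≤ ℓ → ∀ v ∈ Vh,
      α k * A (u k) v + ⟪B v, ψ k - ψ (k - 1)⟫ = α k * f v)
    (ubar : V)
    (hubar : ubar =
      (∑ k ∈ Finset.Icc 1 ℓ, α k)⁻¹ • ∑ k ∈ Finset.Icc 1 ℓ, α k • u k)
    (lambar : W)
    (hlambar : lambar = (∑ k ∈ Finset.Icc 1 ℓ, α k)⁻¹ • (ψ 0 - ψ ℓ))
    (μ : ℝ) (hμ : 0 < μ)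
    (hinfsup : ∀ w ∈ Wh, w ≠ 0 → ∃ v ∈ Vh, v ≠ 0 ∧ μ * ‖v‖ * ‖w‖ ≤ ⟪B v, w⟫) :
    μ * ‖lambar‖ ≤ M * ‖ubar‖ + ‖f‖ :=
  statement8_general Vh Wh B A M hAbdd f ℓ α u ψ hψmem hscheme ubar hubar lambar hlambar μ hinfsup
end

section
/- Let V and W be real Hilbert spaces, V_h ⊆ V and W_h ⊆ W subspaces, B : V → W bounded linear, A : V × V → ℝ bilinear with |A(u,v)| ≤ M·‖u‖·‖v‖ and A(v,v) ≥ C·‖v‖² for all u, v (M, C > 0), f a continuous linear functional on V, K ⊆ V nonempty closed convex, u* ∈ K a solution of the variational inequality A(u*, v − u*) ≥ f(v − u*) for all v ∈ K, λ* ∈ W with ⟨λ*, B v⟩ = A(u*, v) − f(v) for all v ∈ V, and Π : V → V_h a linear Fortin map with ⟨B(v − Π v), w⟩ = 0 for all v ∈ V, w ∈ W_h. Let S ⊆ W be convex with o* := B u* ∈ S, R : W → ℝ convex on S, and let α_k > 0, u_k ∈ V_h, ψ_k ∈ W_h (with a given ψ₀ ∈ W_h), and o_k ∈ S (k ≥ 0)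 satisfy for every k ≥ 1: α_k·A(u_k, v) + ⟨B v, ψ_k − ψ_{k−1}⟩ = α_k·f(v) for all v ∈ V_h, ⟨o_k − B u_k, w⟩ = 0 for all w ∈ W_h, and R differentiable at every o_k (k ≥ 0) with gradient ∇R(o_k) = ψ_k. Then, with D(p, q) := R(p) − R(q) − ⟨∇R(q), p − q⟩ and ū_ℓ = (Σ_{k=1}^ℓ α_k u_k)/(Σ_{k=1}^ℓ α_k), for every ℓ ≥ 1: (C/4)·‖ū_ℓ − u*‖² ≤ D(o*, o₀)/(Σ_{k=1}^ℓ α_k) + ((M² + C²)/(2C))·‖Π u* − u*‖² + |⟨λ*, B(Π u* − u*)⟩| + inf_{v ∈ K} |⟨λ*, B(v − ū_ℓ)⟩|. -/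
/-!
Testing the scheme at step `k` with `v = u_k - Π u*`, the Fortin property and the observation
condition turn `α_k (A(u_k, v) - f(v))` into `⟪o* - o_k, ψ_k - ψ_{k-1}⟫`, which by the three-point
identity is `D(o*, o_{k-1}) - D(o*, o_k) - D(o_k, o_{k-1}) ≤ D(o*, o_{k-1}) - D(o*, o_k)`.
Coercivity, continuity and Young's inequality bound `A(u_k, v) - f(v)` below by
`Φ(u_k) = (C/2)‖u_k - u*‖² + ⟪λ*, B(u_k - Π u*)⟫ - (M²/2C)‖Π u* - u*‖²`. Summing telescopes, and
`Φ` is convex, so Jensen gives `Φ(ū_ℓ) ≤ D(o*, o₀) / Σ α_k`. Finally the variational inequality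
makes `⟪λ*, B(u* - v)⟫ ≤ 0` on `K`, which controls `⟪λ*, B(u* - ū_ℓ)⟫` by the infimum.
-/

open scoped RealInnerProductSpace

open Finset

theorem ConvexOn.le_sub_of_hasFDerivAt {E : Type*} [NormedAddCommGroup E] [NormedSpace ℝ E]
    {S : Set E} {R : E → ℝ} {R' : E →L[ℝ] ℝ} {p q : E} (hR : ConvexOn ℝ S R)
    (hq : q ∈ S) (hp : p ∈ S) (hR' : HasFDerivAt R R' q) :
    R' (p - q) ≤ R p - R q := by
  let g : ℝ →ᵃ[ℝ] E := AffineMap.lineMap q p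
  have hg : HasDerivAt (R ∘ g) (R' (p - q)) 0 := by
    rw [← AffineMap.lineMap_apply_zero (k := ℝ) q p] at hR'
    exact hR'.comp_hasDerivAt 0 AffineMap.hasDerivAt_lineMap
  have h0 : (0 : ℝ) ∈ g ⁻¹' S := by simpa [g] using hq
  have h1 : (1 : ℝ) ∈ g ⁻¹' S := by simpa [g] using hp
  simpa [slope, g] using (hR.comp_affineMap g).le_slope_of_hasDerivAt h0 h1 one_pos hg

section Bregman

variable {W : Type*} [NormedAddCommGroup W] [InnerProductSpace ℝ W]

-- `bregman R g q p` is `D(p, q)`, with `g` standing for `∇R(q)`.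
def bregman (R : W → ℝ) (g q p : W) : ℝ := R p - R q - ⟪g, p - q⟫

theorem bregman_nonneg [CompleteSpace W] {S : Set W} {R : W → ℝ} {g q p : W}
    (hR : ConvexOn ℝ S R) (hq : q ∈ S) (hp : p ∈ S) (hg : HasGradientAt R g q) :
    0 ≤ bregman R g q p := by
  have := hR.le_sub_of_hasFDerivAt hq hp hg.hasFDerivAt
  rw [InnerProductSpace.toDual_apply_apply] at this
  unfold bregman
  linarith

theorem bregman_sub_bregman (R : W → ℝ) (g q g' q' p : W) :
    bregman R g q p - bregman R g' q' p = ⟪p - q', g' - g⟫ + bregman R g q q' := by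
  simp only [bregman, inner_sub_right, real_inner_comm g, real_inner_comm g']
  ring

end Bregman

theorem Finset.sum_Icc_one_pred_sub (D : ℕ → ℝ) (ℓ : ℕ) :
    ∑ k ∈ Icc 1 ℓ, (D (k - 1) - D k) = D 0 - D ℓ := by
  induction ℓ with
  | zero => simp
  | succ n ih => rw [sum_Icc_succ_top (by omega), ih]; simp

theorem ConvexOn.map_centerMass_le_of_telescoping {E : Type*} [AddCommGroup E] [Module ℝ E]
    {Φ : E → ℝ} (hΦ : ConvexOn ℝ Set.univ Φ) {α D : ℕ → ℝ} {u : ℕ → E} {ℓ : ℕ} (hℓ : 1 ≤ ℓ)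
    (hα : ∀ k ∈ Icc 1 ℓ, 0 < α k) (hstep : ∀ k ∈ Icc 1 ℓ, α k * Φ (u k) ≤ D (k - 1) - D k)
    (hD : 0 ≤ D ℓ) :
    Φ ((Icc 1 ℓ).centerMass α u) ≤ D 0 / ∑ k ∈ Icc 1 ℓ, α k := by
  have hT : 0 < ∑ k ∈ Icc 1 ℓ, α k :=
    sum_pos hα ⟨1, mem_Icc.mpr ⟨le_rfl, hℓ⟩⟩
  have hsum : ∑ k ∈ Icc 1 ℓ, α k * Φ (u k) ≤ D 0 :=
    calc ∑ k ∈ Icc 1 ℓ, α k * Φ (u k) ≤ ∑ k ∈ Icc 1 ℓ, (D (k - 1) - D k) := sum_le_sum hstep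
      _ = D 0 - D ℓ := sum_Icc_one_pred_sub D ℓ
      _ ≤ D 0 := by linarith
  calc Φ ((Icc 1 ℓ).centerMass α u)
      ≤ (Icc 1 ℓ).centerMass α (Φ ∘ u) :=
        hΦ.map_centerMass_le (fun k hk => (hα k hk).le) hT (fun _ _ => Set.mem_univ _)
    _ = (∑ k ∈ Icc 1 ℓ, α k * Φ (u k)) / ∑ k ∈ Icc 1 ℓ, α k := by
        simp [centerMass, div_eq_inv_mul]
    _ ≤ D 0 / ∑ k ∈ Icc 1 ℓ, α k := div_le_div_of_nonneg_right hsum hT.le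

theorem le_apply_sub_apply_of_bounded_of_coercive {V : Type*} [NormedAddCommGroup V]
    [NormedSpace ℝ V] {A : V →ₗ[ℝ] V →ₗ[ℝ] ℝ} {M C : ℝ} (hC : 0 < C)
    (hAbdd : ∀ u v : V, |A u v| ≤ M * ‖u‖ * ‖v‖) (hAcoer : ∀ v : V, C * ‖v‖ ^ 2 ≤ A v v)
    (x y z : V) :
    C / 2 * ‖x - z‖ ^ 2 - M ^ 2 / (2 * C) * ‖y - z‖ ^ 2 ≤ A x (x - y) - A z (x - y) := by
  have hsplit : A x (x - y) - A z (x - y) = A (x - z) (x - z) - A (x - z) (y - z) := by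
    rw [← LinearMap.sub_apply, ← map_sub, ← map_sub]
    congr 1; abel
  have hyoung : M * ‖x - z‖ * ‖y - z‖ ≤ C / 2 * ‖x - z‖ ^ 2 + M ^ 2 / (2 * C) * ‖y - z‖ ^ 2 := by
    have hsq : C / 2 * ‖x - z‖ ^ 2 + M ^ 2 / (2 * C) * ‖y - z‖ ^ 2 - M * ‖x - z‖ * ‖y - z‖
        = (C * ‖x - z‖ - M * ‖y - z‖) ^ 2 / (2 * C) := by
      field_simp; ring
    rw [← sub_nonneg, hsq]
    positivity
  have := (le_abs_self _).trans (hAbdd (x - z) (y - z))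
  linarith [hAcoer (x - z)]

theorem convexOn_mul_norm_sub_sq_add {V : Type*} [NormedAddCommGroup V] [NormedSpace ℝ V]
    {c : ℝ} (hc : 0 ≤ c) (z : V) (L : V →ₗ[ℝ] ℝ) (y : V) (b : ℝ) :
    ConvexOn ℝ Set.univ (fun x => c * ‖x - z‖ ^ 2 + L (x - y) - b) := by
  have hsq : ConvexOn ℝ Set.univ (fun x : V => ‖x - z‖ ^ 2) := by
    simpa [Function.comp_def, neg_add_eq_sub] using
      (convexOn_univ_norm.pow (fun _ _ => norm_nonneg _) 2).translate_right (-z)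
  refine (((hsq.smul hc).add (L.convexOn convex_univ)).add_const (-(L y) - b)).congr ?_
  intro x _
  simp only [Pi.add_apply, smul_eq_mul, map_sub]
  ring

theorem apply_sub_le_iInf_abs_apply_sub {V : Type*} [AddCommGroup V] [Module ℝ V]
    {K : Set V} (hK : K.Nonempty) {L : V →ₗ[ℝ] ℝ} {z : V} (hL : ∀ v ∈ K, 0 ≤ L (v - z))
    (x : V) : L (z - x) ≤ ⨅ v : K, |L (v - x)| := by
  have : Nonempty K := hK.to_subtype
  refine le_ciInf fun ⟨v, hv⟩ => ?_
  have hsplit : L (z - x) = -L (v - z) + L (v - x) := by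
    simp only [map_sub]; ring
  linarith [hL v hv, le_abs_self (L (v - x))]

section Galerkin

variable {V W : Type*} [NormedAddCommGroup V] [InnerProductSpace ℝ V]
  [NormedAddCommGroup W] [InnerProductSpace ℝ W]

theorem galerkin_step_eq {Vh : Submodule ℝ V} {Wh : Submodule ℝ W} {B : V →ₗ[ℝ] W}
    {A : V →ₗ[ℝ] V →ₗ[ℝ] ℝ} {f : V →ₗ[ℝ] ℝ} {a : ℝ} {x y yh : V} {ψ ψ' o : W}
    (hx : x ∈ Vh) (hyh : yh ∈ Vh) (hψ : ψ' - ψ ∈ Wh)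
    (hscheme : ∀ v ∈ Vh, a * A x v + ⟪B v, ψ' - ψ⟫ = a * f v)
    (hobs : ∀ w ∈ Wh, ⟪o - B x, w⟫ = 0) (hFortin : ∀ w ∈ Wh, ⟪B (y - yh), w⟫ = 0) :
    a * (A x (x - yh) - f (x - yh)) = ⟪B y - o, ψ' - ψ⟫ := by
  have h1 := hscheme (x - yh) (Vh.sub_mem hx hyh)
  have h2 := hobs _ hψ
  have h3 := hFortin _ hψ
  simp only [map_sub, inner_sub_left] at h1 h2 h3 ⊢
  linarith

theorem proxGalerkin_step_le [CompleteSpace W] {B : V →ₗ[ℝ] W} {A : V →ₗ[ℝ] V →ₗ[ℝ] ℝ}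
    {f : V →ₗ[ℝ] ℝ} {M C : ℝ} (hC : 0 < C) (hAbdd : ∀ u v : V, |A u v| ≤ M * ‖u‖ * ‖v‖)
    (hAcoer : ∀ v : V, C * ‖v‖ ^ 2 ≤ A v v) {ustar : V} {lam : W}
    (hlam : ∀ v : V, ⟪lam, B v⟫ = A ustar v - f v) {S : Set W} {R : W → ℝ}
    (hR : ConvexOn ℝ S R) {a : ℝ} (ha : 0 ≤ a) {x yh : V} {ψ ψ' o o' : W}
    (ho : o ∈ S) (ho' : o' ∈ S) (hgrad : HasGradientAt R ψ o)
    (hstep : a * (A x (x - yh) - f (x - yh)) = ⟪B ustar - o', ψ' - ψ⟫) :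
    a * (C / 2 * ‖x - ustar‖ ^ 2 + ⟪lam, B (x - yh)⟫ - M ^ 2 / (2 * C) * ‖yh - ustar‖ ^ 2)
      ≤ bregman R ψ o (B ustar) - bregman R ψ' o' (B ustar) := by
  have hlow := le_apply_sub_apply_of_bounded_of_coercive hC hAbdd hAcoer x yh ustar
  calc a * (C / 2 * ‖x - ustar‖ ^ 2 + ⟪lam, B (x - yh)⟫ - M ^ 2 / (2 * C) * ‖yh - ustar‖ ^ 2)
      ≤ a * (A x (x - yh) - f (x - yh)) := by
        refine mul_le_mul_of_nonneg_left ?_ ha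
        rw [hlam]
        linarith
    _ = bregman R ψ o (B ustar) - bregman R ψ' o' (B ustar) - bregman R ψ o o' := by
        rw [hstep, bregman_sub_bregman]; ring
    _ ≤ bregman R ψ o (B ustar) - bregman R ψ' o' (B ustar) := by
        linarith [bregman_nonneg hR ho ho' hgrad]

end Galerkin

theorem statement10_general
    {V W : Type*} [NormedAddCommGroup V] [InnerProductSpace ℝ V]
    [NormedAddCommGroup W] [InnerProductSpace ℝ W] [CompleteSpace W]
    (Vh : Submodule ℝ V) (Wh : Submodule ℝ W)
    (B : V →L[ℝ] W)
    (A : V →ₗ[ℝ] V →ₗ[ℝ] ℝ) (M C : ℝ) (hC : 0 < C)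
    (hAbdd : ∀ u v : V, |A u v| ≤ M * ‖u‖ * ‖v‖)
    (hAcoer : ∀ v : V, C * ‖v‖ ^ 2 ≤ A v v)
    (f : V →L[ℝ] ℝ)
    (K : Set V) (hKne : K.Nonempty)
    (ustar : V)
    (hVI : ∀ v ∈ K, f (v - ustar) ≤ A ustar (v - ustar))
    (lam : W) (hlam : ∀ v : V, ⟪lam, B v⟫ = A ustar v - f v)
    (Pih : V →ₗ[ℝ] V) (hPihmem : ∀ v : V, Pih v ∈ Vh)
    (hFortin : ∀ v : V, ∀ w ∈ Wh, ⟪B (v - Pih v), w⟫ = 0)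
    (S : Set W) (hostar : B ustar ∈ S)
    (R : W → ℝ) (hRconv : ConvexOn ℝ S R)
    (α : ℕ → ℝ) (hα : ∀ k, 1 ≤ k → 0 < α k)
    (u : ℕ → V) (ψ : ℕ → W) (o : ℕ → W)
    (humem : ∀ k, 1 ≤ k → u k ∈ Vh) (hψmem : ∀ k, ψ k ∈ Wh)
    (homem : ∀ k, o k ∈ S)
    (hgrad : ∀ k, HasGradientAt R (ψ k) (o k))
    (hscheme : ∀ k, 1 ≤ k → ∀ v ∈ Vh,
      α k * A (u k) v + ⟪B v, ψ k - ψ (k - 1)⟫ = α k * f v)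
    (hobs : ∀ k, 1 ≤ k → ∀ w ∈ Wh, ⟪o k - B (u k), w⟫ = 0)
    (ℓ : ℕ) (hℓ : 1 ≤ ℓ)
    (ubar : V)
    (hubar : ubar =
      (∑ k ∈ Finset.Icc 1 ℓ, α k)⁻¹ • ∑ k ∈ Finset.Icc 1 ℓ, α k • u k) :
    (C / 4) * ‖ubar - ustar‖ ^ 2 ≤
      (R (B ustar) - R (o 0) - ⟪ψ 0, B ustar - o 0⟫) / (∑ k ∈ Finset.Icc 1 ℓ, α k)
        + ((M ^ 2 + C ^ 2) / (2 * C)) * ‖Pih ustar - ustar‖ ^ 2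
        + |⟪lam, B (Pih ustar - ustar)⟫|
        + ⨅ v : K, |⟪lam, B ((v : V) - ubar)⟫| := by
  let L : V →L[ℝ] ℝ := (innerSL ℝ lam).comp B
  let Φ : V → ℝ := fun x =>
    C / 2 * ‖x - ustar‖ ^ 2 + ⟪lam, B (x - Pih ustar)⟫ - M ^ 2 / (2 * C) * ‖Pih ustar - ustar‖ ^ 2
  let D : ℕ → ℝ := fun j => bregman R (ψ j) (o j) (B ustar)
  have hstep : ∀ k ∈ Icc 1 ℓ, α k * Φ (u k) ≤ D (k - 1) - D k := by
    intro k hk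
    have hk1 : 1 ≤ k := (mem_Icc.mp hk).1
    refine proxGalerkin_step_le hC hAbdd hAcoer hlam hRconv (hα k hk1).le (homem _) (homem _)
      (hgrad _) ?_
    exact galerkin_step_eq (humem k hk1) (hPihmem ustar) (Wh.sub_mem (hψmem k) (hψmem _))
      (hscheme k hk1) (hobs k hk1) (hFortin ustar)
  have havg : Φ ubar ≤ D 0 / ∑ k ∈ Icc 1 ℓ, α k := by
    have hΦ : ConvexOn ℝ Set.univ Φ := convexOn_mul_norm_sub_sq_add (by positivity) ustar L _ _
    rw [hubar]
    exact hΦ.map_centerMass_le_of_telescoping hℓ (fun k hk => hα k (mem_Icc.mp hk).1) hstep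
      (bregman_nonneg hRconv (homem ℓ) hostar (hgrad ℓ))
  have hinf : ⟪lam, B (ustar - ubar)⟫ ≤ ⨅ v : K, |⟪lam, B ((v : V) - ubar)⟫| :=
    apply_sub_le_iInf_abs_apply_sub (L := L) hKne
      (fun v hv => show 0 ≤ ⟪lam, B (v - ustar)⟫ from
        hlam (v - ustar) ▸ sub_nonneg.mpr (hVI v hv)) ubar
  have hsplit : ⟪lam, B (ubar - Pih ustar)⟫
      = -⟪lam, B (ustar - ubar)⟫ - ⟪lam, B (Pih ustar - ustar)⟫ := by
    simp only [map_sub, inner_sub_right]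
    ring
  have hcoef : (M ^ 2 + C ^ 2) / (2 * C) = M ^ 2 / (2 * C) + C / 2 := by field_simp
  simp only [Φ, D, bregman, hsplit] at havg
  rw [hcoef]
  linarith [le_abs_self ⟪lam, B (Pih ustar - ustar)⟫, mul_nonneg hC.le (sq_nonneg ‖ubar - ustar‖),
    mul_nonneg hC.le (sq_nonneg ‖Pih ustar - ustar‖)]

/-- Best approximation estimate for the weighted primal averages of the
conforming proximal Galerkin scheme:
`(C/4)·‖ū_ℓ − u*‖² ≤ D(o*, o₀)/(Σ α_k) + ((M² + C²)/(2C))·‖Π u* − u*‖²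
  + |⟨λ*, B(Π u* − u*)⟩| + inf_{v ∈ K} |⟨λ*, B(v − ū_ℓ)⟩|`,
where `D(p, q) = R(p) − R(q) − ⟨∇R(q), p − q⟩` and `o* = B u*`. -/
theorem statement10
    {V W : Type*} [NormedAddCommGroup V] [InnerProductSpace ℝ V] [CompleteSpace V]
    [NormedAddCommGroup W] [InnerProductSpace ℝ W] [CompleteSpace W]
    (Vh : Submodule ℝ V) (Wh : Submodule ℝ W)
    (B : V →L[ℝ] W)
    (A : V →ₗ[ℝ] V →ₗ[ℝ] ℝ) (M C : ℝ) (hM : 0 < M) (hC : 0 < C)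
    (hAbdd : ∀ u v : V, |A u v| ≤ M * ‖u‖ * ‖v‖)
    (hAcoer : ∀ v : V, C * ‖v‖ ^ 2 ≤ A v v)
    (f : V →L[ℝ] ℝ)
    (K : Set V) (hKne : K.Nonempty) (hKcl : IsClosed K) (hKcv : Convex ℝ K)
    (ustar : V) (hustar : ustar ∈ K)
    (hVI : ∀ v ∈ K, f (v - ustar) ≤ A ustar (v - ustar))
    (lam : W) (hlam : ∀ v : V, ⟪lam, B v⟫ = A ustar v - f v)
    (Pih : V →ₗ[ℝ] V) (hPihmem : ∀ v : V, Pih v ∈ Vh)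
    (hFortin : ∀ v : V, ∀ w ∈ Wh, ⟪B (v - Pih v), w⟫ = 0)
    (S : Set W) (hSconv : Convex ℝ S) (hostar : B ustar ∈ S)
    (R : W → ℝ) (hRconv : ConvexOn ℝ S R)
    (α : ℕ → ℝ) (hα : ∀ k, 1 ≤ k → 0 < α k)
    (u : ℕ → V) (ψ : ℕ → W) (o : ℕ → W)
    (humem : ∀ k, 1 ≤ k → u k ∈ Vh) (hψmem : ∀ k, ψ k ∈ Wh)
    (homem : ∀ k, o k ∈ S)
    (hgrad : ∀ k, HasGradientAt R (ψ k) (o k))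
    (hscheme : ∀ k, 1 ≤ k → ∀ v ∈ Vh,
      α k * A (u k) v + ⟪B v, ψ k - ψ (k - 1)⟫ = α k * f v)
    (hobs : ∀ k, 1 ≤ k → ∀ w ∈ Wh, ⟪o k - B (u k), w⟫ = 0)
    (ℓ : ℕ) (hℓ : 1 ≤ ℓ)
    (ubar : V)
    (hubar : ubar =
      (∑ k ∈ Finset.Icc 1 ℓ, α k)⁻¹ • ∑ k ∈ Finset.Icc 1 ℓ, α k • u k) :
    (C / 4) * ‖ubar - ustar‖ ^ 2 ≤
      (R (B ustar) - R (o 0) - ⟪ψ 0, B ustar - o 0⟫) / (∑ k ∈ Finset.Icc 1 ℓ, α k)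
        + ((M ^ 2 + C ^ 2) / (2 * C)) * ‖Pih ustar - ustar‖ ^ 2
        + |⟪lam, B (Pih ustar - ustar)⟫|
        + ⨅ v : K, |⟪lam, B ((v : V) - ubar)⟫| :=
  statement10_general Vh Wh B A M C hC hAbdd hAcoer f K hKne ustar hVI lam hlam Pih hPihmem hFortin
    S hostar R hRconv α hα u ψ o humem hψmem homem hgrad hscheme hobs ℓ hℓ ubar hubar
end
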